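/- arXiv:2302.14241 — 9 statements merged into one kernel-verified Lean document; each statement's English description precedes it below -/
import Mathlib

section
/- Let m be a positive integer, let a : Fin m → ℝ satisfy a v ≥ 0 for all v and ∑ v, a v = 1, and let λ : Fin m → ℝ be arbitrary real numbers. Let k ≥ 1 and t₁, …, t_k be natural numbers whose sum T = t₁ + ⋯ + t_k is even. Then ∏_{i=1}^k (∑ v, a v * (λ v)^{t_i}) ≤ ∑ v, a v * (λ v)^T. -/
/-- Weighted Chebyshev: E[x^s]·E[x^t] ≤ E[x^{s+t}] for nonneg x and prob weights. -/
lemma aux_cheb (m : ℕ) (a x : Fin m → ℝ) (ha : ∀ v, 0 ≤ a v) (hx : ∀ v, 0 ≤ x v)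
    (hsum : ∑ v, a v = 1) (s t : ℕ) :
    (∑ v, a v * x v ^ s) * (∑ v, a v * x v ^ t) ≤ ∑ v, a v * x v ^ (s + t) := by
  have key : 0 ≤ ∑ u, ∑ v, a u * a v * ((x u ^ s - x v ^ s) * (x u ^ t - x v ^ t)) := by
    refine Finset.sum_nonneg fun u _ => Finset.sum_nonneg fun v _ => ?_
    refine mul_nonneg (mul_nonneg (ha u) (ha v)) ?_
    rcases le_total (x u) (x v) with h | h
    · nlinarith [pow_le_pow_left₀ (hx u) h s, pow_le_pow_left₀ (hx u) h t]
    · nlinarith [pow_le_pow_left₀ (hx v) h s, pow_le_pow_left₀ (hx v) h t]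
  have h1 : (∑ v, a v * x v ^ s) * (∑ v, a v * x v ^ t)
      = ∑ u, ∑ v, (a u * x u ^ s) * (a v * x v ^ t) := Finset.sum_mul_sum _ _ _ _
  have h1' : (∑ v, a v * x v ^ s) * (∑ v, a v * x v ^ t)
      = ∑ u, ∑ v, (a u * x u ^ t) * (a v * x v ^ s) := by
    rw [mul_comm]; exact Finset.sum_mul_sum _ _ _ _
  have h2 : (∑ v, a v * x v ^ (s + t))
      = ∑ u, ∑ v, (a u * x u ^ (s + t)) * a v := by
    rw [← Finset.sum_mul_sum, hsum, mul_one]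
  have h3 : (∑ v, a v * x v ^ (s + t))
      = ∑ u, ∑ v, a u * (a v * x v ^ (s + t)) := by
    rw [← Finset.sum_mul_sum, hsum, one_mul]
  have expand : ∑ u, ∑ v, a u * a v * ((x u ^ s - x v ^ s) * (x u ^ t - x v ^ t))
      = (∑ u, ∑ v, (a u * x u ^ (s + t)) * a v)
        + (∑ u, ∑ v, a u * (a v * x v ^ (s + t)))
        - (∑ u, ∑ v, (a u * x u ^ s) * (a v * x v ^ t))
        - (∑ u, ∑ v, (a u * x u ^ t) * (a v * x v ^ s)) := by
    rw [← Finset.sum_add_distrib, ← Finset.sum_sub_distrib, ← Finset.sum_sub_distrib]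
    refine Finset.sum_congr rfl fun u _ => ?_
    rw [← Finset.sum_add_distrib, ← Finset.sum_sub_distrib, ← Finset.sum_sub_distrib]
    refine Finset.sum_congr rfl fun v _ => ?_
    ring
  rw [expand, ← h2, ← h3, ← h1, ← h1'] at key
  linarith

lemma aux_prod (m : ℕ) (a x : Fin m → ℝ) (ha : ∀ v, 0 ≤ a v) (hx : ∀ v, 0 ≤ x v)
    (hsum : ∑ v, a v = 1) (k : ℕ) (t : Fin k → ℕ) :
    ∏ i, (∑ v, a v * x v ^ (t i)) ≤ ∑ v, a v * x v ^ (∑ i, t i) := by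
  classical
  induction (Finset.univ : Finset (Fin k)) using Finset.cons_induction with
  | empty => simp [hsum]
  | cons i s hi ih =>
    rw [Finset.prod_cons, Finset.sum_cons]
    calc (∑ v, a v * x v ^ t i) * ∏ j ∈ s, (∑ v, a v * x v ^ t j)
        ≤ (∑ v, a v * x v ^ t i) * (∑ v, a v * x v ^ (∑ j ∈ s, t j)) := by
          refine mul_le_mul_of_nonneg_left ih ?_
          exact Finset.sum_nonneg fun v _ => mul_nonneg (ha v) (pow_nonneg (hx v) _)
      _ ≤ ∑ v, a v * x v ^ (t i + ∑ j ∈ s, t j) := aux_cheb m a x ha hx hsum _ _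

/-- Product-of-moments inequality `∏ i, E[W^(t i)] ≤ E[W^T]` for a real-valued
random variable `W` taking finitely many values `lam v` with probabilities
`a v`, whenever the total exponent `T = ∑ i, t i` is even. -/
theorem prod_moment_ineq_even (m : ℕ) (hm : 0 < m) (a lam : Fin m → ℝ)
    (ha : ∀ v, 0 ≤ a v) (hsum : ∑ v, a v = 1)
    (k : ℕ) (hk : 1 ≤ k) (t : Fin k → ℕ) (hT : Even (∑ i, t i)) :
    ∏ i, (∑ v, a v * lam v ^ (t i)) ≤ ∑ v, a v * lam v ^ (∑ i, t i) := by
  set x : Fin m → ℝ := fun v => |lam v| with hxdef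
  have hx : ∀ v, 0 ≤ x v := fun v => abs_nonneg _
  have hRHS : (∑ v, a v * lam v ^ (∑ i, t i)) = ∑ v, a v * x v ^ (∑ i, t i) := by
    refine Finset.sum_congr rfl fun v _ => ?_
    rw [hxdef]; rw [hT.pow_abs]
  calc ∏ i, (∑ v, a v * lam v ^ (t i))
      ≤ |∏ i, (∑ v, a v * lam v ^ (t i))| := le_abs_self _
    _ = ∏ i, |∑ v, a v * lam v ^ (t i)| := Finset.abs_prod _ _
    _ ≤ ∏ i, (∑ v, a v * x v ^ (t i)) := by
        refine Finset.prod_le_prod (fun i _ => abs_nonneg _) fun i _ => ?_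
        calc |∑ v, a v * lam v ^ (t i)| ≤ ∑ v, |a v * lam v ^ (t i)| :=
              Finset.abs_sum_le_sum_abs _ _
          _ = ∑ v, a v * x v ^ (t i) := by
              refine Finset.sum_congr rfl fun v _ => ?_
              rw [abs_mul, abs_of_nonneg (ha v), abs_pow]
    _ ≤ ∑ v, a v * x v ^ (∑ i, t i) := aux_prod m a x ha hx hsum k t
    _ = ∑ v, a v * lam v ^ (∑ i, t i) := hRHS.symm
end

section
/- Let V be a finite type with at least 2 elements, P : Matrix V V ℝ a stochastic matrix (all entries nonnegative, each row summing to 1), and π : V → ℝ a probability vector with π x > 0 for all x that is reversible for P, i.e. π x * P x y = π y * P y x for all x, y. Fix y ∈ V, and let P̂ be the principal submatrix of P indexed by {x : V // x ≠ y} (delete the row and column of y). Let A be the matrix on {x // x ≠ y} defined by A x ξ = (π x)^{1/2} * (π ξ)^{-1/2} * P̂ x ξ; then A is symmetric, and denoting by (μ_v) its real eigenvalues (indexed by v : {x // x ≠ y}) together with an orthonormal basis of eigenvectors, there exist nonnegative reals α_v with ∑ v, α_v = 1 − π y such that for every t ∈ ℕ, ∑_{x ≠ y} ∑_{ξ ≠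 y} π x * (P̂^t) x ξ = ∑ v, α_v * (μ_v)^t. -/
open Matrix

/-- Spectral representation of the survival probability
`P_π(τ(y) > t) = ∑ x ≠ y, ∑ ξ ≠ y, π x * (P̂^t) x ξ` for a reversible chain:
the symmetrized submatrix `A x ξ = √(π x) * (√(π ξ))⁻¹ * P̂ x ξ` is symmetric,
and there exist nonnegative coefficients `α v` summing to `1 - π y` such that
the survival probability equals `∑ v, α v * (μ v)^t`, where `μ v` are the
eigenvalues of `A`. -/
theorem spectral_representation_survival
    (V : Type*) [Fintype V] [DecidableEq V] (hV : 2 ≤ Fintype.card V)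
    (P : Matrix V V ℝ) (hP0 : ∀ x z, 0 ≤ P x z) (hP1 : ∀ x, ∑ z, P x z = 1)
    (pi : V → ℝ) (hpi0 : ∀ x, 0 < pi x) (hpi1 : ∑ x, pi x = 1)
    (hrev : ∀ x z, pi x * P x z = pi z * P z x)
    (y : V)
    (A : Matrix {x : V // x ≠ y} {x : V // x ≠ y} ℝ)
    (hA : ∀ x ξ : {x : V // x ≠ y},
      A x ξ = Real.sqrt (pi x.val) * (Real.sqrt (pi ξ.val))⁻¹ * P x.val ξ.val) :
    A.IsSymm ∧
      ∃ (hH : A.IsHermitian) (α : {x : V // x ≠ y} → ℝ),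
        (∀ v, 0 ≤ α v) ∧ (∑ v, α v = 1 - pi y) ∧
        ∀ t : ℕ,
          (∑ x : {x : V // x ≠ y}, ∑ ξ : {x : V // x ≠ y},
              pi x.val * ((P.submatrix Subtype.val Subtype.val) ^ t) x ξ)
            = ∑ v, α v * hH.eigenvalues v ^ t := by
  have hpis : ∀ a : V, Real.sqrt (pi a) ≠ 0 := fun a =>
    ne_of_gt (Real.sqrt_pos.2 (hpi0 a))
  have hsq : ∀ a : V, Real.sqrt (pi a) * Real.sqrt (pi a) = pi a := fun a =>
    Real.mul_self_sqrt (hpi0 a).le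
  have key : ∀ a b : V, Real.sqrt (pi a) * (Real.sqrt (pi b))⁻¹ * P a b
      = Real.sqrt (pi b) * (Real.sqrt (pi a))⁻¹ * P b a := by
    intro a b
    have h := hrev a b
    have ha := hpis a
    have hb := hpis b
    field_simp
    linear_combination P a b * hsq a - P b a * hsq b + h
  have hsymm : A.IsSymm := by
    ext i j
    rw [Matrix.transpose_apply, hA, hA, key]
  have hH : A.IsHermitian := by
    rw [Matrix.IsHermitian, Matrix.conjTranspose_eq_transpose_of_trivial]
    exact hsymm
  set u : {x : V // x ≠ y} → ℝ := fun x => Real.sqrt (pi x.val) with hu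
  set Pe : Matrix {x : V // x ≠ y} {x : V // x ≠ y} ℝ :=
    P.submatrix Subtype.val Subtype.val with hPe
  set D : Matrix {x : V // x ≠ y} {x : V // x ≠ y} ℝ := Matrix.diagonal u with hD
  set E : Matrix {x : V // x ≠ y} {x : V // x ≠ y} ℝ :=
    Matrix.diagonal (fun x => (u x)⁻¹) with hE
  have hDE : D * E = 1 := by
    rw [hD, hE, Matrix.diagonal_mul_diagonal]
    have : (fun i : {x : V // x ≠ y} => u i * (u i)⁻¹) = fun _ => 1 :=
      funext fun x => mul_inv_cancel₀ (hpis x.val)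
    rw [this, Matrix.diagonal_one]
  have hED : E * D = 1 := by
    rw [hD, hE, Matrix.diagonal_mul_diagonal]
    have : (fun i : {x : V // x ≠ y} => (u i)⁻¹ * u i) = fun _ => 1 :=
      funext fun x => inv_mul_cancel₀ (hpis x.val)
    rw [this, Matrix.diagonal_one]
  have hAD : A = D * Pe * E := by
    ext i j
    rw [hD, hE, Matrix.mul_diagonal, Matrix.diagonal_mul, hA]
    show Real.sqrt (pi i.val) * (Real.sqrt (pi j.val))⁻¹ * P i.val j.val
      = Real.sqrt (pi i.val) * Pe i j * (Real.sqrt (pi j.val))⁻¹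
    rw [hPe]
    show Real.sqrt (pi i.val) * (Real.sqrt (pi j.val))⁻¹ * P i.val j.val
      = Real.sqrt (pi i.val) * P i.val j.val * (Real.sqrt (pi j.val))⁻¹
    ring
  have hpow : ∀ t : ℕ, A ^ t = D * (Pe ^ t) * E := by
    intro t
    induction t with
    | zero => rw [pow_zero, pow_zero, mul_one, hDE]
    | succ t ih =>
      rw [pow_succ, ih, pow_succ, hAD]
      simp only [Matrix.mul_assoc]
      rw [← Matrix.mul_assoc E D, hED, one_mul]
  have hentry : ∀ (t : ℕ) (x ξ : {x : V // x ≠ y}),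
      pi x.val * (Pe ^ t) x ξ = u x * (A ^ t) x ξ * u ξ := by
    intro t x ξ
    rw [hpow t, hD, hE, Matrix.mul_diagonal, Matrix.diagonal_mul]
    have h2 : u x * (u x * (Pe ^ t) x ξ * (u ξ)⁻¹) * u ξ
        = (u x * u x) * (Pe ^ t) x ξ * ((u ξ)⁻¹ * u ξ) := by ring
    rw [h2, inv_mul_cancel₀ (hpis ξ.val), mul_one]
    show pi x.val * (Pe ^ t) x ξ
      = Real.sqrt (pi x.val) * Real.sqrt (pi x.val) * (Pe ^ t) x ξ
    rw [hsq]
  set U : Matrix {x : V // x ≠ y} {x : V // x ≠ y} ℝ :=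
    (hH.eigenvectorUnitary : Matrix {x : V // x ≠ y} {x : V // x ≠ y} ℝ) with hUdef
  have hU1 : U * star U = 1 := (Matrix.mem_unitaryGroup_iff).mp hH.eigenvectorUnitary.2
  have hU2 : star U * U = 1 := (Matrix.mem_unitaryGroup_iff').mp hH.eigenvectorUnitary.2
  have hA1 : A = U * Matrix.diagonal hH.eigenvalues * star U := by
    have := hH.spectral_theorem
    simpa using this
  have hmulU : ∀ d e : {x : V // x ≠ y} → ℝ,
      (U * Matrix.diagonal d * star U) * (U * Matrix.diagonal e * star U)
        = U * Matrix.diagonal (fun v => d v * e v) * star U := by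
    intro d e
    simp only [Matrix.mul_assoc]
    rw [← Matrix.mul_assoc (star U) U, hU2, one_mul,
      ← Matrix.mul_assoc (Matrix.diagonal d) (Matrix.diagonal e),
      Matrix.diagonal_mul_diagonal]
  have hspec : ∀ t : ℕ,
      A ^ t = U * Matrix.diagonal (fun v => hH.eigenvalues v ^ t) * star U := by
    intro t
    induction t with
    | zero =>
      simp only [pow_zero]
      rw [Matrix.diagonal_one, mul_one, hU1]
    | succ t ih =>
      have h2 := hmulU (fun v => hH.eigenvalues v ^ t) hH.eigenvalues
      rw [← hA1] at h2
      have h3 : (fun v => hH.eigenvalues v ^ t * hH.eigenvalues v)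
          = fun v => hH.eigenvalues v ^ (t + 1) := funext fun v => (pow_succ _ _).symm
      rw [pow_succ, ih, h2, h3]
  set w : {x : V // x ≠ y} → ℝ := (star U) *ᵥ u with hw
  have hstar : star U = Uᵀ := by
    ext i j
    simp [Matrix.star_apply]
  have hmain : ∀ t : ℕ, (∑ x : {x : V // x ≠ y}, ∑ ξ : {x : V // x ≠ y},
      pi x.val * (Pe ^ t) x ξ) = ∑ v, (w v) ^ 2 * hH.eigenvalues v ^ t := by
    intro t
    have h1 : (∑ x : {x : V // x ≠ y}, ∑ ξ : {x : V // x ≠ y},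
        pi x.val * (Pe ^ t) x ξ) = u ⬝ᵥ ((A ^ t) *ᵥ u) := by
      simp only [dotProduct, Matrix.mulVec, dotProduct, Finset.mul_sum]
      exact Finset.sum_congr rfl fun x _ => Finset.sum_congr rfl fun ξ _ => by
        rw [hentry t x ξ]; ring
    have hvm : u ᵥ* U = w := by
      rw [hw, hstar, Matrix.mulVec_transpose]
    rw [h1, hspec t, ← Matrix.mulVec_mulVec, ← Matrix.mulVec_mulVec,
      Matrix.dotProduct_mulVec, hvm, ← hw]
    simp only [dotProduct, Matrix.mulVec_diagonal]
    exact Finset.sum_congr rfl fun v _ => by ring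
  refine ⟨hsymm, hH, fun v => (w v) ^ 2, fun v => sq_nonneg _, ?_, hmain⟩
  have h0' : (∑ x : {x : V // x ≠ y}, ∑ ξ : {x : V // x ≠ y},
      pi x.val * (Pe ^ 0) x ξ) = ∑ x : {x : V // x ≠ y}, pi x.val := by
    simp only [pow_zero, Matrix.one_apply]
    refine Finset.sum_congr rfl fun x _ => ?_
    rw [Finset.sum_eq_single x] <;> simp +contextual [Ne.symm]
  have hsub : (∑ x : {x : V // x ≠ y}, pi x.val)
      = ∑ x ∈ Finset.univ.erase y, pi x :=
    (Finset.sum_subtype (p := fun x => x ≠ y) (Finset.univ.erase y)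
      (fun x => by simp) pi).symm
  calc (∑ v, (w v) ^ 2)
      = ∑ v, (w v) ^ 2 * hH.eigenvalues v ^ 0 := by simp
    _ = ∑ x : {x : V // x ≠ y}, pi x.val := by rw [← hmain 0, h0']
    _ = 1 - pi y := by
        rw [hsub, Finset.sum_erase_eq_sub (Finset.mem_univ y), hpi1]
end

section
/- Let V be a finite type with at least 2 elements, P : Matrix V V ℝ a stochastic matrix, and π : V → ℝ a probability vector with π x > 0 for all x that is reversible for P (π x * P x y = π y * P y x for all x, y). Assume P is 1/2-lazy, i.e. P = (1/2) • (1 + Q) for some stochastic matrix Q. For y ∈ V and t ∈ ℕ, define the survival probability S π y t := ∑_{x ≠ y} ∑_{ξ ≠ y} π x * (P̂^t) x ξ, where P̂ is the principal submatrix of P deleting the row and column of y. Then for all t, s ∈ ℕ, S π y t * S π y s ≤ (1 − π y) * S π y (t + s). -/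
/-- Ratio monotonicity for a nonnegative log-convex sequence. -/
private lemma lc_ratio (a : ℕ → ℝ) (h0 : ∀ k, 0 ≤ a k)
    (hlc : ∀ k, a (k+1) ^ 2 ≤ a k * a (k+2)) :
    ∀ k m, k ≤ m → a (k+1) * a m ≤ a k * a (m+1) := by
  intro k m hkm
  induction m, hkm using Nat.le_induction with
  | base => rw [mul_comm]
  | succ m hkm ih =>
    rcases eq_or_lt_of_le (h0 (m+1)) with h | h
    · calc a (k+1) * a (m+1) = a (k+1) * 0 := by rw [← h]
        _ = 0 := mul_zero _
        _ ≤ a k * a (m+2) := mul_nonneg (h0 k) (h0 (m+2))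
    · have h1 : a (k+1) * a (m+1) * a (m+1) ≤ a k * a (m+2) * a (m+1) := by
        calc a (k+1) * a (m+1) * a (m+1) = a (k+1) * (a (m+1)) ^ 2 := by ring
          _ ≤ a (k+1) * (a m * a (m+2)) :=
              mul_le_mul_of_nonneg_left (hlc m) (h0 (k+1))
          _ = (a (k+1) * a m) * a (m+2) := by ring
          _ ≤ (a k * a (m+1)) * a (m+2) := mul_le_mul_of_nonneg_right ih (h0 (m+2))
          _ = a k * a (m+2) * a (m+1) := by ring
      exact le_of_mul_le_mul_right h1 h

private lemma lc_main (a : ℕ → ℝ) (h0 : ∀ k, 0 ≤ a k)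
    (hlc : ∀ k, a (k+1) ^ 2 ≤ a k * a (k+2)) :
    ∀ t s : ℕ, a t * a s ≤ a 0 * a (t + s) := by
  have key : ∀ t s : ℕ, t ≤ s → a t * a s ≤ a 0 * a (t + s) := by
    intro t
    induction t with
    | zero => intro s _; simp
    | succ t ih =>
      intro s hts
      have h1 : a (t+1) * a s ≤ a t * a (s+1) :=
        lc_ratio a h0 hlc t s (le_trans (Nat.le_succ t) hts)
      have h2 : a t * a (s+1) ≤ a 0 * a (t + (s+1)) := ih (s+1) (by omega)
      calc a (t+1) * a s ≤ a t * a (s+1) := h1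
        _ ≤ a 0 * a (t + (s+1)) := h2
        _ = a 0 * a (t + 1 + s) := by rw [show t + (s+1) = t + 1 + s by omega]
  intro t s
  rcases le_total t s with h | h
  · exact key t s h
  · calc a t * a s = a s * a t := mul_comm _ _
      _ ≤ a 0 * a (s + t) := key s t h
      _ = a 0 * a (t + s) := by rw [Nat.add_comm]

/-- The key quadratic-form bound for a reversible substochastic nonnegative matrix:
`⟨g, K g⟩_w ≥ -⟨g, g⟩_w`. -/
private lemma quad_bound {n : Type*} [Fintype n] (w : n → ℝ) (hw : ∀ i, 0 < w i)
    (K : Matrix n n ℝ) (hK0 : ∀ i j, 0 ≤ K i j) (hKrow : ∀ i, (∑ j, K i j) ≤ 1)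
    (hKrev : ∀ i j, w i * K i j = w j * K j i) (g : n → ℝ) :
    -(∑ i, w i * g i ^ 2) ≤ ∑ i, ∑ j, w i * K i j * (g i * g j) := by
  have hE : (0:ℝ) ≤ ∑ i, ∑ j, w i * K i j * (g i + g j) ^ 2 := by
    refine Finset.sum_nonneg fun i _ => Finset.sum_nonneg fun j _ => ?_
    exact mul_nonneg (mul_nonneg (hw i).le (hK0 i j)) (sq_nonneg _)
  have hexp : (∑ i, ∑ j, w i * K i j * (g i + g j) ^ 2)
      = (∑ i, ∑ j, w i * K i j * g i ^ 2) + 2 * (∑ i, ∑ j, w i * K i j * (g i * g j))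
        + (∑ i, ∑ j, w i * K i j * g j ^ 2) := by
    have h : ∀ i j : n, w i * K i j * (g i + g j) ^ 2
        = w i * K i j * g i ^ 2 + 2 * (w i * K i j * (g i * g j)) + w i * K i j * g j ^ 2 := by
      intro i j; ring
    simp_rw [h, Finset.sum_add_distrib, ← Finset.mul_sum]
  have hT1 : (∑ i, ∑ j, w i * K i j * g i ^ 2) ≤ ∑ i, w i * g i ^ 2 := by
    refine Finset.sum_le_sum fun i _ => ?_
    have h : (∑ j, w i * K i j * g i ^ 2) = (w i * g i ^ 2) * ∑ j, K i j := by
      rw [Finset.mul_sum]; exact Finset.sum_congr rfl fun j _ => by ring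
    rw [h]
    calc (w i * g i ^ 2) * ∑ j, K i j ≤ (w i * g i ^ 2) * 1 :=
          mul_le_mul_of_nonneg_left (hKrow i) (mul_nonneg (hw i).le (sq_nonneg _))
      _ = w i * g i ^ 2 := mul_one _
  have hT3 : (∑ i, ∑ j, w i * K i j * g j ^ 2) ≤ ∑ i, w i * g i ^ 2 := by
    have hswap : (∑ i, ∑ j, w i * K i j * g j ^ 2) = ∑ j, ∑ i, w j * K j i * g j ^ 2 := by
      rw [Finset.sum_comm]
      refine Finset.sum_congr rfl fun j _ => Finset.sum_congr rfl fun i _ => ?_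
      rw [hKrev i j]
    rw [hswap]
    refine Finset.sum_le_sum fun j _ => ?_
    have h : (∑ i, w j * K j i * g j ^ 2) = (w j * g j ^ 2) * ∑ i, K j i := by
      rw [Finset.mul_sum]; exact Finset.sum_congr rfl fun i _ => by ring
    rw [h]
    calc (w j * g j ^ 2) * ∑ i, K j i ≤ (w j * g j ^ 2) * 1 :=
          mul_le_mul_of_nonneg_left (hKrow j) (mul_nonneg (hw j).le (sq_nonneg _))
      _ = w j * g j ^ 2 := mul_one _
  linarith [hE, hexp ▸ hE]

/-- Two-walk survival inequality for a 1/2-lazy reversible chain started from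
stationarity: `P_π(τ(y) > t) * P_π(τ(y) > s) ≤ (1 - π y) * P_π(τ(y) > t + s)`,
where `S pi y t = ∑ x ≠ y, ∑ ξ ≠ y, π x * (P̂^t) x ξ` is the survival
probability and `P̂` is the principal submatrix of `P` deleting `y`. -/
theorem survival_two_ineq_lazy
    (V : Type*) [Fintype V] [DecidableEq V] (hV : 2 ≤ Fintype.card V)
    (P : Matrix V V ℝ) (hP0 : ∀ x z, 0 ≤ P x z) (hP1 : ∀ x, ∑ z, P x z = 1)
    (pi : V → ℝ) (hpi0 : ∀ x, 0 < pi x) (hpi1 : ∑ x, pi x = 1)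
    (hrev : ∀ x z, pi x * P x z = pi z * P z x)
    (hlazy : ∃ Q : Matrix V V ℝ, (∀ x z, 0 ≤ Q x z) ∧ (∀ x, ∑ z, Q x z = 1) ∧
      P = (1/2 : ℝ) • (1 + Q))
    (S : V → ℕ → ℝ)
    (hS : ∀ (y : V) (t : ℕ), S y t =
      ∑ x : {x : V // x ≠ y}, ∑ ξ : {x : V // x ≠ y},
        pi x.val * ((P.submatrix Subtype.val Subtype.val) ^ t) x ξ) :
    ∀ (y : V) (t s : ℕ), S y t * S y s ≤ (1 - pi y) * S y (t + s) := by
  obtain ⟨Q, hQ0, hQ1, hPQ⟩ := hlazy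
  intro y t s
  -- notation
  set M : Matrix {x : V // x ≠ y} {x : V // x ≠ y} ℝ :=
    P.submatrix Subtype.val Subtype.val with hM
  set r : {x : V // x ≠ y} → ℝ := fun i => Real.sqrt (pi i.val) with hr
  have hrpos : ∀ i, 0 < r i := fun i => Real.sqrt_pos.mpr (hpi0 i.val)
  have hrne : ∀ i, r i ≠ 0 := fun i => (hrpos i).ne'
  have hrr : ∀ i, r i * r i = pi i.val := fun i => Real.mul_self_sqrt (hpi0 i.val).le
  set A : Matrix {x : V // x ≠ y} {x : V // x ≠ y} ℝ :=
    Matrix.of (fun i j => r i * M i j / r j) with hA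
  have hAapp : ∀ i j, A i j = r i * M i j / r j := fun i j => rfl
  -- entries of P via laziness
  have hPent : ∀ x z : V, P x z = 1/2 * ((if x = z then (1:ℝ) else 0) + Q x z) := by
    intro x z
    rw [hPQ]
    simp [Matrix.add_apply, Matrix.one_apply, Matrix.smul_apply]
  have hrevQ : ∀ x z : V, pi x * Q x z = pi z * Q z x := by
    intro x z
    have h1 := hrev x z
    rw [hPent x z, hPent z x] at h1
    by_cases h : x = z
    · subst h; ring
    · simp only [h, Ne.symm h, if_false] at h1
      linarith
  -- powers of A
  have hApow : ∀ k : ℕ, ∀ i j, (A ^ k) i j = r i * (M ^ k) i j / r j := by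
    intro k
    induction k with
    | zero =>
      intro i j
      by_cases h : i = j
      · subst h
        simp [Matrix.one_apply_eq, hrne i]
      · simp [pow_zero, Matrix.one_apply_ne h]
    | succ k ih =>
      intro i j
      rw [pow_succ, Matrix.mul_apply]
      have h : ∀ l, (A ^ k) i l * A l j = r i * ((M ^ k) i l * M l j) / r j := by
        intro l
        rw [ih i l, hAapp]
        field_simp [hrne l, hrne j]
      simp_rw [h]
      rw [← Finset.sum_div, ← Finset.mul_sum, pow_succ, Matrix.mul_apply]
  -- Hermitian
  have hA_symm : ∀ i j, A i j = A j i := by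
    intro i j
    rw [hAapp, hAapp, div_eq_div_iff (hrne j) (hrne i)]
    calc r i * M i j * r i = (r i * r i) * M i j := by ring
      _ = pi i.val * M i j := by rw [hrr]
      _ = pi j.val * M j i := hrev i.val j.val
      _ = (r j * r j) * M j i := by rw [hrr]
      _ = r j * M j i * r j := by ring
  have hHerm : A.IsHermitian := by
    ext i j
    simp only [Matrix.conjTranspose_apply, star_trivial]
    exact hA_symm j i
  -- positive semidefinite
  have hPSD : A.PosSemidef := by
    refine Matrix.PosSemidef.of_dotProduct_mulVec_nonneg hHerm fun x => ?_
    have hstar : star x = x := funext fun i => rfl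
    rw [hstar]
    set g : {x : V // x ≠ y} → ℝ := fun j => x j / r j with hg
    have hx : ∀ j, x j = g j * r j := fun j => (div_mul_cancel₀ (x j) (hrne j)).symm
    have hform : dotProduct x (A.mulVec x)
        = ∑ i, ∑ j, pi i.val * g i * M i j * g j := by
      simp only [dotProduct, Matrix.mulVec, Finset.mul_sum]
      refine Finset.sum_congr rfl fun i _ => Finset.sum_congr rfl fun j _ => ?_
      rw [hAapp, hx i, hx j, ← hrr i]
      field_simp [hrne i, hrne j]
    rw [hform]
    -- entries of M
    have hMent : ∀ i j : {x : V // x ≠ y},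
        M i j = 1/2 * ((if i = j then (1:ℝ) else 0) + Q i.val j.val) := by
      intro i j
      show P i.val j.val = _
      rw [hPent]
      by_cases h : i = j
      · subst h; simp
      · have h2 : i.val ≠ j.val := fun hv => h (Subtype.ext hv)
        simp [h, h2]
    have hsplit : (∑ i, ∑ j, pi i.val * g i * M i j * g j)
        = 1/2 * (∑ i, pi i.val * g i ^ 2)
          + 1/2 * (∑ i, ∑ j, pi i.val * Q i.val j.val * (g i * g j)) := by
      have hterm : ∀ i j : {x : V // x ≠ y}, pi i.val * g i * M i j * g j
          = 1/2 * ((if i = j then pi i.val * (g i * g j) else 0)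
              + pi i.val * Q i.val j.val * (g i * g j)) := by
        intro i j; rw [hMent]; split_ifs <;> ring
      simp_rw [hterm, mul_add, Finset.sum_add_distrib, ← Finset.mul_sum]
      congr 1
      congr 1
      refine Finset.sum_congr rfl fun i _ => ?_
      rw [Finset.sum_ite_eq, if_pos (Finset.mem_univ i)]
      ring
    rw [hsplit]
    have hq1 : ∀ i : {x : V // x ≠ y}, (∑ j : {x : V // x ≠ y}, Q i.val j.val) ≤ 1 := by
      intro i
      have h1 : (∑ j : {x : V // x ≠ y}, Q i.val j.val)
          = ∑ z ∈ Finset.univ.filter (· ≠ y), Q i.val z := by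
        rw [Finset.sum_subtype (p := fun z => z ≠ y) (Finset.univ.filter (· ≠ y))
          (by simp) (fun z => Q i.val z)]
      rw [h1]
      calc (∑ z ∈ Finset.univ.filter (· ≠ y), Q i.val z) ≤ ∑ z, Q i.val z :=
            Finset.sum_le_sum_of_subset_of_nonneg (Finset.filter_subset _ _)
              (fun z _ _ => hQ0 _ _)
        _ = 1 := hQ1 _
    have hb := quad_bound (fun i : {x : V // x ≠ y} => pi i.val) (fun i => hpi0 i.val)
      (Matrix.of fun i j : {x : V // x ≠ y} => Q i.val j.val)
      (fun i j => hQ0 _ _) hq1 (fun i j => hrevQ i.val j.val) g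
    simp only [Matrix.of_apply] at hb
    have hnn : (0:ℝ) ≤ ∑ i : {x : V // x ≠ y}, pi i.val * g i ^ 2 :=
      Finset.sum_nonneg fun i _ => mul_nonneg (hpi0 i.val).le (sq_nonneg _)
    linarith
  -- square root
  obtain ⟨B, hBsa, -, hBB⟩ := open scoped MatrixOrder in
    CFC.exists_sqrt_of_isSelfAdjoint_of_quasispectrumRestricts (a := A) hPSD.isHermitian
      (QuasispectrumRestricts.nnreal_of_nonneg hPSD.nonneg)
  have hBH : B.IsHermitian := hBsa
  have hA2 : ∀ k : ℕ, A ^ k = B ^ (2 * k) := by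
    intro k
    rw [← hBB, ← pow_two, ← pow_mul]
  have hTsym : ∀ m : ℕ, Matrix.transpose (B ^ m) = B ^ m := by
    intro m
    have hm : (B ^ m).IsHermitian := hBH.pow m
    ext i j
    rw [Matrix.transpose_apply]
    conv_rhs => rw [← hm]
    simp [Matrix.conjTranspose_apply]
  set c : ℕ → ({x : V // x ≠ y} → ℝ) := fun k => (B ^ k).mulVec r with hc
  have hcross : ∀ m k : ℕ, dotProduct (c m) (c k)
      = dotProduct r ((B ^ (m + k)).mulVec r) := by
    intro m k
    rw [pow_add, ← Matrix.mulVec_mulVec, Matrix.dotProduct_mulVec r,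
      ← Matrix.mulVec_transpose, hTsym]
  -- the sequence
  set a : ℕ → ℝ := fun k => ∑ x : {x : V // x ≠ y}, ∑ ξ : {x : V // x ≠ y},
      pi x.val * (M ^ k) x ξ with ha
  have haA : ∀ k, a k = dotProduct r ((A ^ k).mulVec r) := by
    intro k
    simp only [ha, dotProduct, Matrix.mulVec, Finset.mul_sum]
    refine Finset.sum_congr rfl fun i _ => Finset.sum_congr rfl fun j _ => ?_
    rw [hApow k i j, ← hrr i]
    field_simp [hrne i, hrne j]
  have haB : ∀ k, a k = dotProduct (c k) (c k) := by
    intro k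
    rw [haA, hA2, hcross, show k + k = 2 * k by ring]
  have ha0 : ∀ k, 0 ≤ a k := by
    intro k
    rw [haB]
    exact Finset.sum_nonneg fun i _ => mul_self_nonneg _
  have halc : ∀ k, a (k + 1) ^ 2 ≤ a k * a (k + 2) := by
    intro k
    have h1 : a (k + 1) = dotProduct (c k) (c (k + 2)) := by
      rw [haA, hA2, hcross, show k + (k + 2) = 2 * (k + 1) by ring]
    rw [h1, haB k, haB (k + 2)]
    have := Finset.sum_mul_sq_le_sq_mul_sq Finset.univ (c k) (c (k + 2))
    simpa [dotProduct, pow_two] using this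
  -- a 0 = 1 - pi y
  have ha0v : a 0 = 1 - pi y := by
    simp only [ha, pow_zero]
    have h1 : ∀ i : {x : V // x ≠ y},
        (∑ j : {x : V // x ≠ y}, pi i.val * (1 : Matrix _ _ ℝ) i j) = pi i.val := by
      intro i
      rw [← Finset.mul_sum]
      simp [Matrix.one_apply, Finset.sum_ite_eq]
    rw [Finset.sum_congr rfl fun i _ => h1 i]
    have h2 : (∑ i : {x : V // x ≠ y}, pi i.val)
        = ∑ z ∈ Finset.univ.filter (· ≠ y), pi z := by
      rw [Finset.sum_subtype (p := fun z => z ≠ y) (Finset.univ.filter (· ≠ y)) (by simp) pi]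
    rw [h2, Finset.filter_ne', Finset.sum_erase_eq_sub (Finset.mem_univ y), hpi1]
  -- conclude
  rw [hS y t, hS y s, hS y (t + s)]
  have := lc_main a ha0 halc t s
  rw [ha0v] at this
  exact this
end

section
/- Let V be a finite type with at least 2 elements, P : Matrix V V ℝ a stochastic matrix, and π : V → ℝ a probability vector with π x > 0 for all x that is reversible for P (π x * P x y = π y * P y x for all x, y). Assume P is 1/2-lazy, i.e. P = (1/2) • (1 + Q) for some stochastic matrix Q. For y ∈ V and t ∈ ℕ, define S π y t := ∑_{x ≠ y} ∑_{ξ ≠ y} π x * (P̂^t) x ξ, where P̂ is the principal submatrix of P deleting the row and column of y. Then for every k ≥ 2 and all t₁, …, t_k ∈ ℕ, ∏_{i=1}^k S π y t_i ≤ (1 − π y)^{k−1} * S π y (t₁ + ⋯ + t_k). -/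
open scoped Matrix


-- Chebyshev sum inequality, weighted
lemma cheb_aux {n : Type*} [Fintype n] (c lam : n → ℝ) (hc : ∀ i, 0 ≤ c i)
    (hlam : ∀ i, 0 ≤ lam i) (t s : ℕ) :
    (∑ i, c i * lam i ^ t) * (∑ i, c i * lam i ^ s) ≤
      (∑ i, c i) * (∑ i, c i * lam i ^ (t + s)) := by
  have key : 0 ≤ ∑ i, ∑ j, c i * c j *
      ((lam i ^ t - lam j ^ t) * (lam i ^ s - lam j ^ s)) := by
    refine Finset.sum_nonneg fun i _ => Finset.sum_nonneg fun j _ => ?_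
    refine mul_nonneg (mul_nonneg (hc i) (hc j)) ?_
    rcases le_total (lam i) (lam j) with h | h
    · have h1 := mul_nonneg
        (sub_nonneg.2 (pow_le_pow_left₀ (hlam i) h t))
        (sub_nonneg.2 (pow_le_pow_left₀ (hlam i) h s))
      nlinarith
    · exact mul_nonneg
        (sub_nonneg.2 (pow_le_pow_left₀ (hlam j) h t))
        (sub_nonneg.2 (pow_le_pow_left₀ (hlam j) h s))
  have expand : ∑ i, ∑ j, c i * c j *
      ((lam i ^ t - lam j ^ t) * (lam i ^ s - lam j ^ s)) =
      2 * ((∑ i, c i) * (∑ i, c i * lam i ^ (t + s)))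
        - 2 * ((∑ i, c i * lam i ^ t) * (∑ i, c i * lam i ^ s)) := by
    have h1 : ∀ i j, c i * c j * ((lam i ^ t - lam j ^ t) * (lam i ^ s - lam j ^ s)) =
        c i * lam i ^ (t + s) * c j + c i * (c j * lam j ^ (t + s))
          - c i * lam i ^ t * (c j * lam j ^ s) - c i * lam i ^ s * (c j * lam j ^ t) := by
      intro i j; rw [pow_add, pow_add]; ring
    simp only [h1, Finset.sum_sub_distrib, Finset.sum_add_distrib, ← Finset.sum_mul,
      ← Finset.mul_sum]
    ring
  linarith

-- spectral representation of quadratic form of powers of a PSD matrix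
lemma psd_rep {n : Type*} [Fintype n] [DecidableEq n] {A : Matrix n n ℝ}
    (hA : Matrix.PosSemidef A) (x : n → ℝ) :
    ∃ c lam : n → ℝ, (∀ i, 0 ≤ c i) ∧ (∀ i, 0 ≤ lam i) ∧
      ∀ t : ℕ, x ⬝ᵥ (A ^ t) *ᵥ x = ∑ i, c i * lam i ^ t := by
  have hH := hA.1
  set U := (hH.eigenvectorUnitary : Matrix n n ℝ) with hU
  set lam := hH.eigenvalues with hlamdef
  have hUU : U * star U = 1 := Matrix.mem_unitaryGroup_iff.mp hH.eigenvectorUnitary.2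
  have hUU' : star U * U = 1 := Matrix.mem_unitaryGroup_iff'.mp hH.eigenvectorUnitary.2
  have hdiag : A = U * Matrix.diagonal lam * star U := by
    simpa using hH.spectral_theorem
  have hpow : ∀ t : ℕ, A ^ t = U * Matrix.diagonal (fun i => lam i ^ t) * star U := by
    intro t
    induction t with
    | zero => simp [hUU]
    | succ t ih =>
      rw [pow_succ, ih, hdiag]
      simp only [Matrix.mul_assoc]
      rw [← Matrix.mul_assoc (star U) U, hUU', Matrix.one_mul,
        ← Matrix.mul_assoc (Matrix.diagonal _) (Matrix.diagonal _)]
      simp [Matrix.diagonal_mul_diagonal, ← pow_succ]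
  set v := (star U) *ᵥ x with hv
  refine ⟨fun i => v i ^ 2, lam, fun i => sq_nonneg _, hA.eigenvalues_nonneg, fun t => ?_⟩
  rw [hpow t]
  have hvec : Matrix.vecMul x U = v := by
    ext i
    simp [Matrix.vecMul, Matrix.mulVec, dotProduct, hv, Matrix.star_apply, mul_comm]
  rw [← Matrix.mulVec_mulVec, ← Matrix.mulVec_mulVec, Matrix.dotProduct_mulVec, hvec]
  simp [Matrix.mulVec_diagonal, dotProduct]
  exact Finset.sum_congr rfl fun i _ => by ring


lemma helper1 (a b p M x1 x2 : ℝ) (ha : a ≠ 0) (hp : a * a = p) :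
    x1 * (a * M * b⁻¹ * x2) = p * M * (x1 * a⁻¹ * (x2 * b⁻¹)) := by
  subst hp
  have e1 : a⁻¹ * a = 1 := inv_mul_cancel₀ ha
  linear_combination (-(M * x1 * x2 * b⁻¹ * a)) * e1

lemma helper2 (a b p M : ℝ) (hb : b ≠ 0) (hp : a * a = p) :
    p * M = a * (a * M * b⁻¹ * b) := by
  subst hp
  have e2 : b⁻¹ * b = 1 := inv_mul_cancel₀ hb
  linear_combination (-(a * a * M)) * e2

lemma helper3 (a b p q M N : ℝ) (ha : a ≠ 0) (hb : b ≠ 0) (hpa : a * a = p) (hqb : b * b = q)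
    (h : q * N = p * M) : b * N * a⁻¹ = a * M * b⁻¹ := by
  subst hpa; subst hqb
  have hne : a * b ≠ 0 := mul_ne_zero ha hb
  apply mul_left_cancel₀ hne
  have e1 : a⁻¹ * a = 1 := inv_mul_cancel₀ ha
  have e2 : b⁻¹ * b = 1 := inv_mul_cancel₀ hb
  linear_combination (N * b * b) * e1 - (M * a * a) * e2 + h


/-- Iterated survival inequality (pointwise form of Theorem 1.1, lazy case):
`∏ i, P_π(τ(y) > t i) ≤ (1 - π y)^(k-1) * P_π(τ(y) > ∑ i, t i)` for a
1/2-lazy reversible chain, where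
`S pi y t = ∑ x ≠ y, ∑ ξ ≠ y, π x * (P̂^t) x ξ`. -/
theorem survival_iterated_ineq_lazy
    (V : Type*) [Fintype V] [DecidableEq V] (hV : 2 ≤ Fintype.card V)
    (P : Matrix V V ℝ) (hP0 : ∀ x z, 0 ≤ P x z) (hP1 : ∀ x, ∑ z, P x z = 1)
    (pi : V → ℝ) (hpi0 : ∀ x, 0 < pi x) (hpi1 : ∑ x, pi x = 1)
    (hrev : ∀ x z, pi x * P x z = pi z * P z x)
    (hlazy : ∃ Q : Matrix V V ℝ, (∀ x z, 0 ≤ Q x z) ∧ (∀ x, ∑ z, Q x z = 1) ∧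
      P = (1/2 : ℝ) • (1 + Q))
    (S : V → ℕ → ℝ)
    (hS : ∀ (y : V) (t : ℕ), S y t =
      ∑ x : {x : V // x ≠ y}, ∑ ξ : {x : V // x ≠ y},
        pi x.val * ((P.submatrix Subtype.val Subtype.val) ^ t) x ξ) :
    ∀ (k : ℕ), 2 ≤ k → ∀ (t : Fin k → ℕ) (y : V),
      ∏ i, S y (t i) ≤ (1 - pi y) ^ (k - 1) * S y (∑ i, t i) := by
  intro k hk t y
  obtain ⟨Q, hQ0, hQ1, hPQ⟩ := hlazy
  have hPsplit : ∀ a b : V, P a b = 1/2 * ((if a = b then (1:ℝ) else 0) + Q a b) := by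
    intro a b
    rw [hPQ]
    simp [Matrix.smul_apply, Matrix.add_apply, Matrix.one_apply, smul_eq_mul]
  have hQrev : ∀ a b : V, pi a * Q a b = pi b * Q b a := by
    intro a b
    have h := hrev a b
    rw [hPsplit a b, hPsplit b a] at h
    by_cases hab : a = b
    · subst hab; rfl
    · simp only [hab, Ne.symm hab, if_false, zero_add] at h
      linear_combination 2 * h
  set Ph : Matrix {x : V // x ≠ y} {x : V // x ≠ y} ℝ :=
    P.submatrix Subtype.val Subtype.val with hPh
  set w : {x : V // x ≠ y} → ℝ := fun x => Real.sqrt (pi x.val) with hwdef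
  have hw0 : ∀ x, 0 < w x := fun x => Real.sqrt_pos.2 (hpi0 _)
  have hw2 : ∀ x, w x * w x = pi x.val := fun x => Real.mul_self_sqrt (hpi0 _).le
  set Dw : Matrix {x : V // x ≠ y} {x : V // x ≠ y} ℝ := Matrix.diagonal w with hDw
  set Di : Matrix {x : V // x ≠ y} {x : V // x ≠ y} ℝ :=
    Matrix.diagonal (fun x => (w x)⁻¹) with hDi
  have hDwDi : Dw * Di = 1 := by
    rw [hDw, hDi, Matrix.diagonal_mul_diagonal]
    have : (fun x => w x * (w x)⁻¹) = fun _ => (1:ℝ) := by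
      funext x; exact mul_inv_cancel₀ (hw0 x).ne'
    rw [this, Matrix.diagonal_one]
  have hDiDw : Di * Dw = 1 := by
    rw [hDw, hDi, Matrix.diagonal_mul_diagonal]
    have : (fun x => (w x)⁻¹ * w x) = fun _ => (1:ℝ) := by
      funext x; exact inv_mul_cancel₀ (hw0 x).ne'
    rw [this, Matrix.diagonal_one]
  set A : Matrix {x : V // x ≠ y} {x : V // x ≠ y} ℝ := Dw * Ph * Di with hA
  have hAe : ∀ x ξ, A x ξ = w x * Ph x ξ * (w ξ)⁻¹ := by
    intro x ξ
    rw [hA, hDw, hDi, Matrix.mul_diagonal, Matrix.diagonal_mul]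
  have hApow : ∀ m : ℕ, A ^ m = Dw * Ph ^ m * Di := by
    intro m
    induction m with
    | zero => rw [pow_zero, pow_zero, Matrix.mul_one, hDwDi]
    | succ m ih =>
      rw [pow_succ, ih, hA, pow_succ]
      calc Dw * Ph ^ m * Di * (Dw * Ph * Di)
          = Dw * Ph ^ m * (Di * Dw) * Ph * Di := by
            simp only [Matrix.mul_assoc]
        _ = Dw * (Ph ^ m * Ph) * Di := by
            rw [hDiDw, Matrix.mul_one]
            simp only [Matrix.mul_assoc]
  -- S equals the quadratic form
  have hSf : ∀ m : ℕ, S y m = w ⬝ᵥ (A ^ m) *ᵥ w := by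
    intro m
    rw [hS]
    rw [dotProduct]
    refine Finset.sum_congr rfl fun x _ => ?_
    rw [Matrix.mulVec, dotProduct, Finset.mul_sum]
    refine Finset.sum_congr rfl fun ξ _ => ?_
    rw [hApow m]
    have hent : (Dw * Ph ^ m * Di) x ξ = w x * (Ph ^ m) x ξ * (w ξ)⁻¹ := by
      rw [hDw, hDi, Matrix.mul_diagonal, Matrix.diagonal_mul]
    rw [hent]
    exact helper2 (w x) (w ξ) (pi x.val) ((Ph ^ m) x ξ) (hw0 ξ).ne' (hw2 x)
  -- A is PSD
  have hherm : A.IsHermitian := by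
    rw [Matrix.IsHermitian]
    ext x ξ
    rw [Matrix.conjTranspose_apply, hAe, hAe, star_trivial]
    exact helper3 (w x) (w ξ) (pi x.val) (pi ξ.val) (Ph x ξ) (Ph ξ x)
      (hw0 x).ne' (hw0 ξ).ne' (hw2 x) (hw2 ξ) (hrev ξ.val x.val)
  have hrowQ : ∀ a : V, ∑ ξ : {x : V // x ≠ y}, Q a ξ.val ≤ 1 := by
    intro a
    have h1 : ∑ ξ : {x : V // x ≠ y}, Q a ξ.val
        = ∑ z ∈ Finset.univ.erase y, Q a z := by
      exact (Finset.sum_subtype (Finset.univ.erase y) (fun z => by simp) (fun z => Q a z)).symm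
    rw [h1, ← hQ1 a]
    exact Finset.sum_le_sum_of_subset_of_nonneg (Finset.erase_subset _ _)
      (fun z _ _ => hQ0 a z)
  have hquad : ∀ v : {x : V // x ≠ y} → ℝ, 0 ≤ v ⬝ᵥ A *ᵥ v := by
    intro v
    set u : {x : V // x ≠ y} → ℝ := fun x => v x * (w x)⁻¹ with hu
    have hvw : ∀ x, v x = u x * w x := by
      intro x
      show v x = v x * (w x)⁻¹ * w x
      rw [mul_assoc, inv_mul_cancel₀ (hw0 x).ne', mul_one]
    have h1 : v ⬝ᵥ A *ᵥ v = ∑ x : {x : V // x ≠ y}, ∑ ξ : {x : V // x ≠ y},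
        pi x.val * P x.val ξ.val * (u x * u ξ) := by
      rw [dotProduct]
      refine Finset.sum_congr rfl fun x _ => ?_
      rw [Matrix.mulVec, dotProduct, Finset.mul_sum]
      refine Finset.sum_congr rfl fun ξ _ => ?_
      rw [hAe x ξ]
      exact helper1 (w x) (w ξ) (pi x.val) (Ph x ξ) (v x) (v ξ) (hw0 x).ne' (hw2 x)
    rw [h1]
    have h2 : ∀ x ξ : {x : V // x ≠ y}, pi x.val * P x.val ξ.val * (u x * u ξ) =
        1/2 * (pi x.val * (if x = ξ then (1:ℝ) else 0) * (u x * u ξ))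
          + 1/2 * (pi x.val * Q x.val ξ.val * (u x * u ξ)) := by
      intro x ξ
      rw [hPsplit]
      have : (if x.val = ξ.val then (1:ℝ) else 0) = (if x = ξ then (1:ℝ) else 0) := by
        simp [Subtype.ext_iff]
      rw [this]; ring
    simp_rw [h2, Finset.sum_add_distrib]
    set D : ℝ := ∑ x : {x : V // x ≠ y}, pi x.val * (u x * u x) with hDdef
    have hDnn : 0 ≤ D := Finset.sum_nonneg fun x _ =>
      mul_nonneg (hpi0 _).le (mul_self_nonneg _)
    have hdiag : ∑ x : {x : V // x ≠ y}, ∑ ξ : {x : V // x ≠ y},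
        1/2 * (pi x.val * (if x = ξ then (1:ℝ) else 0) * (u x * u ξ)) = 1/2 * D := by
      rw [hDdef, Finset.mul_sum]
      refine Finset.sum_congr rfl fun x _ => ?_
      simp [mul_ite, ite_mul, mul_zero, zero_mul, mul_one, Finset.sum_ite_eq,
        Finset.mem_univ]
    rw [hdiag]
    set T1 : ℝ := ∑ x : {x : V // x ≠ y}, ∑ ξ : {x : V // x ≠ y},
      pi x.val * Q x.val ξ.val * (u x * u x) with hT1def
    set T2 : ℝ := ∑ x : {x : V // x ≠ y}, ∑ ξ : {x : V // x ≠ y},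
      pi x.val * Q x.val ξ.val * (u ξ * u ξ) with hT2def
    set SQ : ℝ := ∑ x : {x : V // x ≠ y}, ∑ ξ : {x : V // x ≠ y},
      pi x.val * Q x.val ξ.val * (u x * u ξ) with hSQdef
    have hrowbound : ∀ x : {x : V // x ≠ y},
        ∑ ξ : {x : V // x ≠ y}, pi x.val * Q x.val ξ.val * (u x * u x)
          ≤ pi x.val * (u x * u x) := by
      intro x
      have : ∑ ξ : {x : V // x ≠ y}, pi x.val * Q x.val ξ.val * (u x * u x)
          = pi x.val * (u x * u x) * ∑ ξ : {x : V // x ≠ y}, Q x.val ξ.val := by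
        rw [Finset.mul_sum]
        exact Finset.sum_congr rfl fun ξ _ => by ring
      rw [this]
      calc pi x.val * (u x * u x) * ∑ ξ : {x : V // x ≠ y}, Q x.val ξ.val
          ≤ pi x.val * (u x * u x) * 1 := by
            exact mul_le_mul_of_nonneg_left (hrowQ _)
              (mul_nonneg (hpi0 _).le (mul_self_nonneg _))
        _ = pi x.val * (u x * u x) := mul_one _
    have hT1 : T1 ≤ D := by
      rw [hT1def, hDdef]
      exact Finset.sum_le_sum fun x _ => hrowbound x
    have hT2 : T2 ≤ D := by
      have he : ∑ x : {x : V // x ≠ y}, ∑ ξ : {x : V // x ≠ y},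
          pi x.val * Q x.val ξ.val * (u ξ * u ξ)
            = ∑ x : {x : V // x ≠ y}, ∑ ξ : {x : V // x ≠ y},
          pi ξ.val * Q ξ.val x.val * (u ξ * u ξ) :=
        Finset.sum_congr rfl fun x _ => Finset.sum_congr rfl fun ξ _ => by rw [hQrev]
      rw [hT2def, he, Finset.sum_comm, hDdef]
      exact Finset.sum_le_sum fun ξ _ => hrowbound ξ
    have hSQ : -(1/2) * (T1 + T2) ≤ SQ := by
      have hpt : ∀ x ξ : {x : V // x ≠ y},
          -(1/2) * (pi x.val * Q x.val ξ.val * (u x * u x)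
              + pi x.val * Q x.val ξ.val * (u ξ * u ξ))
            ≤ pi x.val * Q x.val ξ.val * (u x * u ξ) := by
        intro x ξ
        have h0 : 0 ≤ pi x.val * Q x.val ξ.val :=
          mul_nonneg (hpi0 _).le (hQ0 _ _)
        nlinarith [mul_nonneg h0 (sq_nonneg (u x + u ξ))]
      calc -(1/2) * (T1 + T2)
          = ∑ x : {x : V // x ≠ y}, ∑ ξ : {x : V // x ≠ y},
            -(1/2) * (pi x.val * Q x.val ξ.val * (u x * u x)
              + pi x.val * Q x.val ξ.val * (u ξ * u ξ)) := by
            rw [hT1def, hT2def, ← Finset.sum_add_distrib, Finset.mul_sum]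
            refine Finset.sum_congr rfl fun x _ => ?_
            rw [← Finset.sum_add_distrib, Finset.mul_sum]
        _ ≤ SQ := by
            rw [hSQdef]
            exact Finset.sum_le_sum fun x _ => Finset.sum_le_sum fun ξ _ => hpt x ξ
    have hhalf : ∑ x : {x : V // x ≠ y}, ∑ ξ : {x : V // x ≠ y},
        1/2 * (pi x.val * Q x.val ξ.val * (u x * u ξ)) = 1/2 * SQ := by
      rw [hSQdef, Finset.mul_sum]
      exact Finset.sum_congr rfl fun x _ => (Finset.mul_sum _ _ _).symm
    rw [hhalf]
    linarith
  have hpsd : A.PosSemidef := by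
    refine Matrix.posSemidef_iff_dotProduct_mulVec.2 ⟨hherm, fun v => ?_⟩
    simpa using hquad v
  obtain ⟨c, lam, hc, hlam, hrep⟩ := psd_rep hpsd w
  have hsumW : ∑ x : {x : V // x ≠ y}, pi x.val = 1 - pi y := by
    have h1 : ∑ x : {x : V // x ≠ y}, pi x.val
        = ∑ z ∈ Finset.univ.erase y, pi z := by
      exact (Finset.sum_subtype (Finset.univ.erase y) (fun z => by simp) (fun z => pi z)).symm
    have h2 := Finset.add_sum_erase Finset.univ pi (Finset.mem_univ y)
    rw [h1]
    rw [hpi1] at h2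
    linarith
  have hf0 : ∑ i, c i = 1 - pi y := by
    have h1 := hrep 0
    have h2 := hSf 0
    have h3 : S y 0 = ∑ x : {x : V // x ≠ y}, pi x.val := by
      rw [hS]
      refine Finset.sum_congr rfl fun x _ => ?_
      rw [pow_zero]
      simp [Matrix.one_apply, mul_ite, mul_one, mul_zero, Finset.sum_ite_eq,
        Finset.mem_univ]
    have h4 : ∑ i, c i * lam i ^ 0 = ∑ i, c i := by
      simp
    rw [← h4, ← h1, ← h2, h3, hsumW]
  have hSrep : ∀ m : ℕ, S y m = ∑ i, c i * lam i ^ m := by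
    intro m; rw [hSf m, hrep m]
  have hSnn : ∀ m : ℕ, 0 ≤ S y m := by
    intro m
    rw [hSrep m]
    exact Finset.sum_nonneg fun i _ => mul_nonneg (hc i) (pow_nonneg (hlam i) m)
  have h1pi : 0 ≤ 1 - pi y := by
    rw [← hf0]; exact Finset.sum_nonneg fun i _ => hc i
  have key : ∀ a b : ℕ, S y a * S y b ≤ (1 - pi y) * S y (a + b) := by
    intro a b
    rw [hSrep a, hSrep b, hSrep (a + b), ← hf0]
    exact cheb_aux c lam hc hlam a b
  have main : ∀ m : ℕ, ∀ τ : Fin (m + 1) → ℕ,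
      ∏ i, S y (τ i) ≤ (1 - pi y) ^ m * S y (∑ i, τ i) := by
    intro m
    induction m with
    | zero => intro τ; simp
    | succ m ih =>
      intro τ
      rw [Fin.prod_univ_succ, Fin.sum_univ_succ]
      calc S y (τ 0) * ∏ i : Fin (m + 1), S y (τ i.succ)
          ≤ S y (τ 0) * ((1 - pi y) ^ m * S y (∑ i : Fin (m + 1), τ i.succ)) :=
            mul_le_mul_of_nonneg_left (ih _) (hSnn _)
        _ = (1 - pi y) ^ m * (S y (τ 0) * S y (∑ i : Fin (m + 1), τ i.succ)) := by ring
        _ ≤ (1 - pi y) ^ m * ((1 - pi y) * S y (τ 0 + ∑ i : Fin (m + 1), τ i.succ)) :=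
            mul_le_mul_of_nonneg_left (key _ _) (pow_nonneg h1pi m)
        _ = (1 - pi y) ^ (m + 1) * S y (τ 0 + ∑ i : Fin (m + 1), τ i.succ) := by ring
  obtain ⟨m, rfl⟩ : ∃ m, k = m + 1 := ⟨k - 1, by omega⟩
  simpa using main m t
end

section
/- Let V be a finite type with at least 2 elements, P : Matrix V V ℝ a stochastic matrix, and π : V → ℝ a probability vector with π x > 0 for all x that is reversible for P (π x * P x y = π y * P y x for all x, y). Assume P is 1/2-lazy, i.e. P = (1/2) • (1 + Q) for some stochastic matrix Q. For y ∈ V and t ∈ ℕ, define S π y t := ∑_{x ≠ y} ∑_{ξ ≠ y} π x * (P̂^t) x ξ, where P̂ is the principal submatrix of P deleting the row and column of y. Then for every k ≥ 2 and all t₁, …, t_k ∈ ℕ, (Fintype.card V : ℝ) − ∑_{y ∈ V} ∏_{i=1}^k S π y t_i ≥ (Fintype.card V : ℝ) − ∑_{y ∈ V} S π y (t₁ + ⋯ + t_k). -/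
open scoped Matrix

private lemma seq_superadd {ι : Type*} [Fintype ι] (u : ℕ → ι → ℝ) (φ : ℕ → ℝ)
    (hu : ∀ a b : ℕ, φ (a + b) = ∑ i, u a i * u b i)
    (h0 : φ 0 ≤ 1) (m n : ℕ) :
    φ (2 * m) * φ (2 * n) ≤ φ (2 * (m + n)) := by
  have hnn : ∀ a, 0 ≤ φ (2 * a) := by
    intro a
    rw [two_mul, hu]
    exact Finset.sum_nonneg fun i _ => mul_self_nonneg _
  have hzero : ∀ a, φ (2 * a) = 0 → ∀ b, φ (a + b) = 0 := by
    intro a ha b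
    rw [two_mul, hu] at ha
    have h1 : ∀ i ∈ Finset.univ, u a i * u a i = 0 :=
      (Finset.sum_eq_zero_iff_of_nonneg (fun i _ => mul_self_nonneg _)).1 ha
    rw [hu]
    exact Finset.sum_eq_zero fun i _ => by
      rw [mul_self_eq_zero.1 (h1 i (Finset.mem_univ i)), zero_mul]
  have hCS : ∀ a b : ℕ, φ (a + b) ^ 2 ≤ φ (2 * a) * φ (2 * b) := by
    intro a b
    rw [hu a b, two_mul, two_mul, hu a a, hu b b]
    have := Finset.sum_mul_sq_le_sq_mul_sq Finset.univ (u a) (u b)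
    simpa [pow_two] using this
  rcases (hnn (m + n)).eq_or_lt with hz | hp
  · rcases le_total n m with h | h
    · have h1 : φ (2 * m) = 0 := by
        have := hzero (m + n) hz.symm (m - n)
        rwa [show m + n + (m - n) = 2 * m by omega] at this
      rw [h1, zero_mul, ← hz]
    · have h1 : φ (2 * n) = 0 := by
        have := hzero (m + n) hz.symm (n - m)
        rwa [show m + n + (n - m) = 2 * n by omega] at this
      rw [h1, mul_zero, ← hz]
  · have hposall : ∀ j, j ≤ m + n → 0 < φ (2 * j) := by
      intro j hj
      rcases (hnn j).eq_or_lt with hz0 | h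
      · exfalso
        have := hzero j hz0.symm (2 * (m + n) - j)
        rw [show j + (2 * (m + n) - j) = 2 * (m + n) by omega] at this
        exact hp.ne' this
      · exact h
    have h0nn : 0 ≤ φ 0 := by have := hnn 0; simpa using this
    have step : ∀ a b, a ≤ b → (b + 1 ≤ m + n →
        φ (2 * (a + 1)) * φ (2 * b) ≤ φ (2 * a) * φ (2 * (b + 1))) := by
      intro a b hab
      induction b, hab using Nat.le_induction with
      | base => intro _; exact le_of_eq (mul_comm _ _)
      | succ b hab ih =>
        intro hb
        have ihb := ih (by omega)
        have hconv : φ (2 * (b + 1)) ^ 2 ≤ φ (2 * b) * φ (2 * (b + 2)) := by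
          have := hCS b (b + 2)
          rwa [show b + (b + 2) = 2 * (b + 1) by ring] at this
        have pb := hposall b (by omega)
        have pb1 := hposall (b + 1) (by omega)
        have h1 := mul_le_mul_of_nonneg_right ihb pb1.le
        have h2 := mul_le_mul_of_nonneg_left hconv (hnn a)
        rw [show 2 * (b + 1 + 1) = 2 * (b + 2) by ring]
        nlinarith [hnn (a + 1), hnn (b + 2), hnn a]
    have claim : ∀ q p, p + q ≤ m + n → φ (2 * p) * φ (2 * q) ≤ φ 0 * φ (2 * (p + q)) := by
      intro q
      induction q with
      | zero => intro p hp'; rw [Nat.mul_zero, Nat.add_zero]; exact le_of_eq (mul_comm _ _)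
      | succ q ih =>
        intro p hp'
        have ihp := ih p (by omega)
        have st := step q (p + q) (Nat.le_add_left q p) (by omega)
        have pq := hposall q (by omega)
        have h1 := mul_le_mul_of_nonneg_right ihp (hnn (q + 1))
        have h2 := mul_le_mul_of_nonneg_left st h0nn
        rw [show p + (q + 1) = p + q + 1 by ring]
        nlinarith [hnn p, hnn (q + 1), hnn (p + q + 1)]
    have := claim n m le_rfl
    nlinarith [hnn (m + n)]

private lemma S_props {V : Type*} [Fintype V] [DecidableEq V]
    (P : Matrix V V ℝ)
    (pi : V → ℝ) (hpi0 : ∀ x, 0 < pi x) (hpi1 : ∑ x, pi x = 1)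
    (hrev : ∀ x z, pi x * P x z = pi z * P z x)
    (hlazy : ∃ Q : Matrix V V ℝ, (∀ x z, 0 ≤ Q x z) ∧ (∀ x, ∑ z, Q x z = 1) ∧
      P = (1/2 : ℝ) • (1 + Q))
    (y : V) (Sy : ℕ → ℝ)
    (hSy : ∀ t, Sy t = ∑ x : {x : V // x ≠ y}, ∑ ξ : {x : V // x ≠ y},
        pi x.val * ((P.submatrix Subtype.val Subtype.val) ^ t) x ξ) :
    (∀ t, 0 ≤ Sy t) ∧ ∀ a b, Sy a * Sy b ≤ Sy (a + b) := by
  obtain ⟨Q, hQ0, hQ1, hPQ⟩ := hlazy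
  have hPentry : ∀ x z : V, P x z = (1/2) * ((if x = z then (1:ℝ) else 0) + Q x z) := by
    intro x z
    rw [hPQ]
    simp [Matrix.smul_apply, Matrix.add_apply, Matrix.one_apply]
  have hQrev : ∀ x z : V, pi x * Q x z = pi z * Q z x := by
    intro x z
    by_cases hxz : x = z
    · rw [hxz]
    · have h := hrev x z
      rw [hPentry x z, hPentry z x] at h
      simp only [if_neg hxz, if_neg (Ne.symm hxz)] at h
      linarith
  set W := {x : V // x ≠ y} with hW
  set Phat : Matrix W W ℝ := P.submatrix Subtype.val Subtype.val with hPhatdef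
  set v : W → ℝ := fun x => Real.sqrt (pi x.val) with hvdef
  have hv : ∀ x : W, 0 < v x := fun x => Real.sqrt_pos.2 (hpi0 _)
  have hvne : ∀ x : W, v x ≠ 0 := fun x => (hv x).ne'
  have hvsq : ∀ x : W, v x * v x = pi x.val := fun x => Real.mul_self_sqrt (hpi0 _).le
  set M : Matrix W W ℝ :=
    Matrix.diagonal v * Phat * Matrix.diagonal (fun x => (v x)⁻¹) with hMdef
  have hMentry : ∀ (A : Matrix W W ℝ) (a b : W),
      (Matrix.diagonal v * A * Matrix.diagonal (fun x => (v x)⁻¹)) a b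
        = v a * A a b * (v b)⁻¹ := by
    intro A a b
    rw [Matrix.mul_diagonal, Matrix.diagonal_mul]
  have hED : Matrix.diagonal (fun x : W => (v x)⁻¹) * Matrix.diagonal v = 1 := by
    rw [Matrix.diagonal_mul_diagonal]
    have : (fun x : W => (v x)⁻¹ * v x) = fun _ => (1:ℝ) := by
      funext x; exact inv_mul_cancel₀ (hvne x)
    rw [this, Matrix.diagonal_one]
  have hDE : Matrix.diagonal v * Matrix.diagonal (fun x : W => (v x)⁻¹) = 1 := by
    rw [Matrix.diagonal_mul_diagonal]
    have : (fun x : W => v x * (v x)⁻¹) = fun _ => (1:ℝ) := by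
      funext x; exact mul_inv_cancel₀ (hvne x)
    rw [this, Matrix.diagonal_one]
  have hMpow : ∀ t : ℕ, M ^ t
      = Matrix.diagonal v * Phat ^ t * Matrix.diagonal (fun x => (v x)⁻¹) := by
    intro t
    induction t with
    | zero => rw [pow_zero, pow_zero, Matrix.mul_one, hDE]
    | succ t ih =>
      rw [pow_succ, ih, pow_succ, hMdef]
      have h1 : Matrix.diagonal (fun x : W => (v x)⁻¹) *
          (Matrix.diagonal v * Phat * Matrix.diagonal (fun x : W => (v x)⁻¹))
          = Phat * Matrix.diagonal (fun x : W => (v x)⁻¹) := by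
        rw [Matrix.mul_assoc (Matrix.diagonal v) Phat, ← Matrix.mul_assoc, hED, Matrix.one_mul]
      calc Matrix.diagonal v * Phat ^ t * Matrix.diagonal (fun x : W => (v x)⁻¹) *
            (Matrix.diagonal v * Phat * Matrix.diagonal (fun x : W => (v x)⁻¹))
          = Matrix.diagonal v * Phat ^ t *
            (Matrix.diagonal (fun x : W => (v x)⁻¹) *
              (Matrix.diagonal v * Phat * Matrix.diagonal (fun x : W => (v x)⁻¹))) := by
            rw [Matrix.mul_assoc]
        _ = Matrix.diagonal v * Phat ^ t *
            (Phat * Matrix.diagonal (fun x : W => (v x)⁻¹)) := by rw [h1]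
        _ = Matrix.diagonal v * (Phat ^ t * Phat) * Matrix.diagonal (fun x : W => (v x)⁻¹) := by
            simp only [Matrix.mul_assoc]
  have hMe : ∀ (t : ℕ) (a b : W), (M ^ t) a b = v a * (Phat ^ t) a b * (v b)⁻¹ := by
    intro t a b; rw [hMpow t, hMentry]
  have hMsym : M.IsHermitian := by
    rw [Matrix.IsHermitian, Matrix.conjTranspose_eq_transpose_of_trivial]
    ext a b
    rw [Matrix.transpose_apply, hMdef, hMentry, hMentry]
    have h := hrev b.val a.val
    have h2 := hvsq a
    have h3 := hvsq b
    have key : v b * Phat b a * v b = v a * Phat a b * v a := by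
      simp only [hPhatdef, Matrix.submatrix_apply]
      linear_combination h + P b.val a.val * h3 - P a.val b.val * h2
    field_simp [hvne a, hvne b]
    linear_combination key
  have hMpsd : M.PosSemidef := by
    refine Matrix.PosSemidef.of_dotProduct_mulVec_nonneg hMsym ?_
    intro x
    have hstar : star x = x := by funext i; simp
    rw [hstar]
    have hexp : x ⬝ᵥ (M *ᵥ x) = ∑ a : W, ∑ b : W, x a * (M a b * x b) := by
      simp [dotProduct, Matrix.mulVec, Finset.mul_sum]
    rw [hexp]
    have hMab : ∀ a b : W, M a b
        = 1/2 * ((if a = b then (1:ℝ) else 0) + v a * Q a.val b.val * (v b)⁻¹) := by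
      intro a b
      rw [hMdef, hMentry, hPhatdef, Matrix.submatrix_apply, hPentry]
      by_cases hab : a = b
      · subst hab
        simp only [if_pos rfl]
        field_simp [hvne a]
      · have hab' : a.val ≠ b.val := fun h => hab (Subtype.ext h)
        simp only [if_neg hab, if_neg hab']
        ring
    have e1 : ∀ a b : W, x a * (M a b * x b)
        = 1/2 * (if a = b then x a * x b else 0)
          + 1/2 * (x a * (v a * Q a.val b.val * (v b)⁻¹) * x b) := by
      intro a b
      rw [hMab a b]
      by_cases hab : a = b
      · simp only [if_pos hab]; ring
      · simp only [if_neg hab]; ring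
    have key : ∀ a b : W, -(1/2 * (Q a.val b.val * (x a * x a) + Q b.val a.val * (x b * x b)))
        ≤ x a * (v a * Q a.val b.val * (v b)⁻¹) * x b := by
      intro a b
      set N := v a * Q a.val b.val * (v b)⁻¹ with hN
      have hN0 : 0 ≤ N := mul_nonneg (mul_nonneg (hv a).le (hQ0 _ _)) (inv_nonneg.2 (hv b).le)
      have hpbne : pi b.val ≠ 0 := (hpi0 _).ne'
      have hinv : (v b)⁻¹ * (v b)⁻¹ = (pi b.val)⁻¹ := by rw [← mul_inv, hvsq b]
      have hN2 : N * N = Q a.val b.val * Q b.val a.val := by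
        calc N * N
            = (v a * v a) * (Q a.val b.val * Q a.val b.val) * ((v b)⁻¹ * (v b)⁻¹) := by ring
          _ = pi a.val * (Q a.val b.val * Q a.val b.val) * (pi b.val)⁻¹ := by
              rw [hvsq a, hinv]
          _ = Q a.val b.val * Q b.val a.val := by
              field_simp
              linear_combination Q a.val b.val * hQrev a.val b.val
      rcases (hQ0 b.val a.val).eq_or_lt with hqz | hqpos
      · have hNz : N = 0 := by
          have : N * N = 0 := by rw [hN2, ← hqz, mul_zero]
          exact mul_self_eq_zero.1 this
        rw [hNz, mul_zero, zero_mul, ← hqz]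
        nlinarith [hQ0 a.val b.val, mul_self_nonneg (x a), mul_self_nonneg (x b)]
      · have h2 : N * N * (x a * x a) = Q a.val b.val * Q b.val a.val * (x a * x a) := by
          rw [hN2]
        nlinarith [sq_nonneg (N * x a + Q b.val a.val * x b), h2, hqpos,
          hQ0 a.val b.val, mul_self_nonneg (x a), mul_self_nonneg (x b)]
    have hrow : ∀ a : W, ∑ b : W, Q a.val b.val ≤ 1 := by
      intro a
      have h1 : ∑ b : W, Q a.val b.val
          = ∑ b ∈ Finset.univ.filter (fun z : V => z ≠ y), Q a.val b :=
        (Finset.sum_subtype _ (fun b => by simp) (fun z => Q a.val z)).symm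
      rw [h1, ← hQ1 a.val]
      exact Finset.sum_le_sum_of_subset_of_nonneg (Finset.filter_subset _ _)
        (fun i _ _ => hQ0 _ _)
    have hA : ∑ a : W, ∑ b : W, Q a.val b.val * (x a * x a) ≤ ∑ a : W, x a * x a := by
      calc ∑ a : W, ∑ b : W, Q a.val b.val * (x a * x a)
          = ∑ a : W, (∑ b : W, Q a.val b.val) * (x a * x a) := by
            exact Finset.sum_congr rfl fun a _ => (Finset.sum_mul _ _ _).symm
        _ ≤ ∑ a : W, 1 * (x a * x a) :=
            Finset.sum_le_sum fun a _ =>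
              mul_le_mul_of_nonneg_right (hrow a) (mul_self_nonneg _)
        _ = ∑ a : W, x a * x a := by simp
    have hB : ∑ a : W, ∑ b : W, Q b.val a.val * (x b * x b) ≤ ∑ a : W, x a * x a := by
      rw [Finset.sum_comm]
      exact hA
    have hδ : ∑ a : W, ∑ b : W, (if a = b then x a * x b else 0) = ∑ a : W, x a * x a := by
      refine Finset.sum_congr rfl fun a _ => ?_
      simp
    have hterm : ∀ a b : W,
        1/2 * (if a = b then x a * x b else 0)
          - 1/4 * (Q a.val b.val * (x a * x a) + Q b.val a.val * (x b * x b))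
        ≤ x a * (M a b * x b) := by
      intro a b
      rw [e1 a b]
      have := key a b
      linarith
    have hsplit : ∑ a : W, ∑ b : W,
        (1/2 * (if a = b then x a * x b else 0)
          - 1/4 * (Q a.val b.val * (x a * x a) + Q b.val a.val * (x b * x b)))
        = 1/2 * (∑ a : W, x a * x a)
          - (1/4 * (∑ a : W, ∑ b : W, Q a.val b.val * (x a * x a))
            + 1/4 * (∑ a : W, ∑ b : W, Q b.val a.val * (x b * x b))) := by
      rw [← hδ]
      simp only [Finset.sum_sub_distrib, Finset.mul_sum, Finset.sum_add_distrib, mul_add]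
    calc (0:ℝ)
        ≤ ∑ a : W, ∑ b : W,
            (1/2 * (if a = b then x a * x b else 0)
              - 1/4 * (Q a.val b.val * (x a * x a) + Q b.val a.val * (x b * x b))) := by
          rw [hsplit]
          linarith [hA, hB]
      _ ≤ ∑ a : W, ∑ b : W, x a * (M a b * x b) :=
          Finset.sum_le_sum fun a _ => Finset.sum_le_sum fun b _ => hterm a b
  have hBex : ∃ B : Matrix W W ℝ, B.PosSemidef ∧ B * B = M := by
    open scoped MatrixOrder in
    exact ⟨CFC.sqrt M, Matrix.nonneg_iff_posSemidef.mp (CFC.sqrt_nonneg M), CFC.sqrt_mul_sqrt_self M hMpsd.nonneg⟩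
  obtain ⟨B, hBpsd, hBB⟩ := hBex
  have hBsym : ∀ s : ℕ, (B ^ s)ᵀ = B ^ s := by
    intro s
    have h1 : (B ^ s)ᴴ = B ^ s := hBpsd.1.pow s
    rwa [Matrix.conjTranspose_eq_transpose_of_trivial] at h1
  set u : ℕ → W → ℝ := fun s => (B ^ s) *ᵥ v with hudef
  set φ : ℕ → ℝ := fun s => v ⬝ᵥ ((B ^ s) *ᵥ v) with hφdef
  have hvecmul : ∀ s : ℕ, v ᵥ* (B ^ s) = (B ^ s) *ᵥ v := by
    intro s
    conv_lhs => rw [← hBsym s]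
    rw [Matrix.vecMul_transpose]
  have hu : ∀ a b : ℕ, φ (a + b) = ∑ i, u a i * u b i := by
    intro a b
    have h1 : (B ^ (a + b)) *ᵥ v = (B ^ a) *ᵥ ((B ^ b) *ᵥ v) := by
      rw [Matrix.mulVec_mulVec, ← pow_add]
    show v ⬝ᵥ ((B ^ (a + b)) *ᵥ v) = u a ⬝ᵥ u b
    rw [h1, Matrix.dotProduct_mulVec, hvecmul a]
  have h0 : φ 0 ≤ 1 := by
    have he : φ 0 = ∑ x : W, pi x.val := by
      show v ⬝ᵥ ((B ^ 0) *ᵥ v) = _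
      rw [pow_zero, Matrix.one_mulVec]
      exact Finset.sum_congr rfl fun i _ => hvsq i
    rw [he, ← hpi1]
    have h1 : ∑ x : W, pi x.val
        = ∑ x ∈ Finset.univ.filter (fun z : V => z ≠ y), pi x :=
      (Finset.sum_subtype _ (fun b => by simp) (fun z => pi z)).symm
    rw [h1]
    exact Finset.sum_le_sum_of_subset_of_nonneg (Finset.filter_subset _ _)
      (fun i _ _ => (hpi0 i).le)
  have hSφ : ∀ t, Sy t = φ (2 * t) := by
    intro t
    have hBM : B ^ (2 * t) = M ^ t := by
      rw [pow_mul]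
      congr 1
      rw [pow_two, hBB]
    rw [hSy t]
    show _ = v ⬝ᵥ ((B ^ (2 * t)) *ᵥ v)
    rw [hBM]
    show _ = ∑ a : W, v a * ((M ^ t) *ᵥ v) a
    refine Finset.sum_congr rfl fun a _ => ?_
    show _ = v a * ∑ b : W, (M ^ t) a b * v b
    rw [Finset.mul_sum]
    refine Finset.sum_congr rfl fun b _ => ?_
    rw [hMe t a b]
    have e : v a * (v a * (Phat ^ t) a b * (v b)⁻¹ * v b)
        = (v a * v a) * (Phat ^ t) a b * ((v b)⁻¹ * v b) := by ring
    rw [e, hvsq a, inv_mul_cancel₀ (hvne b), mul_one]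
  constructor
  · intro t
    rw [hSφ t]
    have h1 := hu t t
    rw [← two_mul] at h1
    rw [h1]
    exact Finset.sum_nonneg fun i _ => mul_self_nonneg _
  · intro a b
    rw [hSφ a, hSφ b, hSφ (a + b)]
    exact seq_superadd u φ hu h0 a b


/-- Theorem 1.1 (One vs. Many, 1/2-lazy case):
`E_{π^k}|⋃ R_i(t_i)| ≥ E_π|R(∑ t_i)|`, expressed via survival probabilities:
the expected range of `k` independent stationary walks,
`|V| − ∑_y ∏_i P_π(τ_i(y) > t_i)`, is at least the expected range of a single
stationary walk of the combined lifespan, `|V| − ∑_y P_π(τ(y) > ∑ t_i)`. -/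
theorem one_vs_many_lazy
    (V : Type*) [Fintype V] [DecidableEq V] (hV : 2 ≤ Fintype.card V)
    (P : Matrix V V ℝ) (hP0 : ∀ x z, 0 ≤ P x z) (hP1 : ∀ x, ∑ z, P x z = 1)
    (pi : V → ℝ) (hpi0 : ∀ x, 0 < pi x) (hpi1 : ∑ x, pi x = 1)
    (hrev : ∀ x z, pi x * P x z = pi z * P z x)
    (hlazy : ∃ Q : Matrix V V ℝ, (∀ x z, 0 ≤ Q x z) ∧ (∀ x, ∑ z, Q x z = 1) ∧
      P = (1/2 : ℝ) • (1 + Q))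
    (S : V → ℕ → ℝ)
    (hS : ∀ (y : V) (t : ℕ), S y t =
      ∑ x : {x : V // x ≠ y}, ∑ ξ : {x : V // x ≠ y},
        pi x.val * ((P.submatrix Subtype.val Subtype.val) ^ t) x ξ) :
    ∀ (k : ℕ), 2 ≤ k → ∀ (t : Fin k → ℕ),
      (Fintype.card V : ℝ) - ∑ y : V, ∏ i, S y (t i) ≥
        (Fintype.card V : ℝ) - ∑ y : V, S y (∑ i, t i) := by
  intro k hk t
  rw [ge_iff_le, sub_le_sub_iff_left]
  apply Finset.sum_le_sum
  intro y _
  obtain ⟨hnn, hsup⟩ := S_props P pi hpi0 hpi1 hrev hlazy y (S y) (hS y)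
  have prodle : ∀ (m : ℕ) (s : Fin (m + 1) → ℕ), ∏ i, S y (s i) ≤ S y (∑ i, s i) := by
    intro m
    induction m with
    | zero => intro s; rw [Fin.prod_univ_one, Fin.sum_univ_one]
    | succ m ih =>
      intro s
      rw [Fin.prod_univ_succ, Fin.sum_univ_succ]
      calc S y (s 0) * ∏ i : Fin (m + 1), S y (s i.succ)
          ≤ S y (s 0) * S y (∑ i : Fin (m + 1), s i.succ) :=
            mul_le_mul_of_nonneg_left (ih _) (hnn _)
        _ ≤ S y (s 0 + ∑ i : Fin (m + 1), s i.succ) := hsup _ _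
  obtain ⟨k', rfl⟩ : ∃ k', k = k' + 1 := ⟨k - 1, by omega⟩
  exact prodle k' t
end

section
/- Let V be a finite type with at least 2 elements, P : Matrix V V ℝ a stochastic matrix, and π : V → ℝ a probability vector with π x > 0 for all x that is reversible for P (π x * P x y = π y * P y x for all x, y). For y ∈ V and t ∈ ℕ, define S π y t := ∑_{x ≠ y} ∑_{ξ ≠ y} π x * (P̂^t) x ξ, where P̂ is the principal submatrix of P deleting the row and column of y. Then for every k ≥ 2 and all t₁, …, t_k ∈ ℕ such that t₁ + ⋯ + t_k is EVEN, ∏_{i=1}^k S π y t_i ≤ (1 − π y)^{k−1} * S π y (t₁ + ⋯ + t_k). -/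
open Finset Matrix

/-- Weighted Chebyshev sum inequality for powers of nonnegative reals. -/
lemma cheb_aux_s8 {ι : Type*} [Fintype ι] (a x : ι → ℝ) (ha : ∀ j, 0 ≤ a j)
    (hx : ∀ j, 0 ≤ x j) (s t : ℕ) :
    (∑ j, a j * x j ^ s) * (∑ j, a j * x j ^ t) ≤ (∑ j, a j) * ∑ j, a j * x j ^ (s + t) := by
  have key : ∀ j l : ι, 0 ≤ a j * a l * ((x j ^ s - x l ^ s) * (x j ^ t - x l ^ t)) := by
    intro j l
    rcases le_total (x j) (x l) with h | h
    · have hs := pow_le_pow_left₀ (hx j) h s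
      have ht := pow_le_pow_left₀ (hx j) h t
      exact mul_nonneg (mul_nonneg (ha j) (ha l))
        (by nlinarith)
    · have hs := pow_le_pow_left₀ (hx l) h s
      have ht := pow_le_pow_left₀ (hx l) h t
      exact mul_nonneg (mul_nonneg (ha j) (ha l)) (mul_nonneg (by linarith) (by linarith))
  have expand : ∑ j, ∑ l, a j * a l * ((x j ^ s - x l ^ s) * (x j ^ t - x l ^ t))
      = (∑ j, a j * x j ^ (s + t)) * (∑ l, a l) + (∑ j, a j) * (∑ l, a l * x l ^ (s + t))
        - (∑ j, a j * x j ^ s) * (∑ l, a l * x l ^ t)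
        - (∑ j, a j * x j ^ t) * (∑ l, a l * x l ^ s) := by
    simp only [Finset.sum_mul_sum, ← Finset.sum_sub_distrib, ← Finset.sum_add_distrib]
    refine Finset.sum_congr rfl fun j _ => Finset.sum_congr rfl fun l _ => ?_
    rw [pow_add, pow_add]; ring
  have h0 : 0 ≤ ∑ j, ∑ l : ι, a j * a l * ((x j ^ s - x l ^ s) * (x j ^ t - x l ^ t)) :=
    Finset.sum_nonneg fun j _ => Finset.sum_nonneg fun l _ => key j l
  rw [expand] at h0
  nlinarith [h0]

/-- Spectral decomposition of the quadratic form `v ⬝ᵥ Bᵗ *ᵥ v` for a real symmetric `B`. -/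
lemma quad_decomp {n : Type*} [Fintype n] [DecidableEq n] (B : Matrix n n ℝ)
    (hB : B.IsHermitian) (v : n → ℝ) :
    ∃ a lam : n → ℝ, (∀ j, 0 ≤ a j) ∧
      ∀ t : ℕ, v ⬝ᵥ ((B ^ t) *ᵥ v) = ∑ j, a j * lam j ^ t := by
  set U : Matrix n n ℝ := (hB.eigenvectorUnitary : Matrix n n ℝ) with hUdef
  set lam : n → ℝ := hB.eigenvalues with hlam
  have hU1 : star U * U = 1 := (Unitary.mem_iff.mp hB.eigenvectorUnitary.2).1
  have hspec : B = U * Matrix.diagonal lam * star U := by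
    have := hB.spectral_theorem
    simpa using this
  have hpow : ∀ t : ℕ, B ^ t = U * Matrix.diagonal (fun j => lam j ^ t) * star U := by
    intro t
    induction t with
    | zero =>
      have h1 : Matrix.diagonal (fun j : n => lam j ^ 0) = (1 : Matrix n n ℝ) := by simp
      rw [pow_zero, h1, mul_one]
      exact ((Unitary.mem_iff.mp hB.eigenvectorUnitary.2).2).symm
    | succ t ih =>
      rw [pow_succ, ih, hspec]
      calc U * Matrix.diagonal (fun j => lam j ^ t) * star U * (U * Matrix.diagonal lam * star U)
          = U * (Matrix.diagonal (fun j => lam j ^ t) * (star U * U) * Matrix.diagonal lam) * star U := by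
            noncomm_ring
        _ = U * Matrix.diagonal (fun j => lam j ^ (t + 1)) * star U := by
            rw [hU1, mul_one, Matrix.diagonal_mul_diagonal]
            simp [pow_succ]
  have entry : ∀ (t : ℕ) (x ξ : n), (B ^ t) x ξ = ∑ j, U x j * lam j ^ t * U ξ j := by
    intro t x ξ
    rw [hpow t, Matrix.mul_apply]
    refine Finset.sum_congr rfl fun j _ => ?_
    rw [Matrix.mul_diagonal]
    simp [Matrix.star_apply, mul_comm, mul_assoc, mul_left_comm]
  refine ⟨fun j => (∑ x, U x j * v x) * (∑ x, U x j * v x), lam, fun j => mul_self_nonneg _, ?_⟩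
  intro t
  have lhs_eq : v ⬝ᵥ ((B ^ t) *ᵥ v)
      = ∑ x, ∑ ξ, ∑ j, v x * (U x j * lam j ^ t * U ξ j * v ξ) := by
    simp only [dotProduct, Matrix.mulVec, entry, Finset.sum_mul, Finset.mul_sum]
  have hswap : ∑ x, ∑ ξ, ∑ j, v x * (U x j * lam j ^ t * U ξ j * v ξ)
      = ∑ j, ∑ x, ∑ ξ, v x * (U x j * lam j ^ t * U ξ j * v ξ) := by
    rw [show (∑ x, ∑ ξ, ∑ j, v x * (U x j * lam j ^ t * U ξ j * v ξ))
        = ∑ x, ∑ j, ∑ ξ, v x * (U x j * lam j ^ t * U ξ j * v ξ) from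
      Finset.sum_congr rfl fun x _ => Finset.sum_comm]
    exact Finset.sum_comm
  rw [lhs_eq, hswap]
  refine Finset.sum_congr rfl fun j _ => ?_
  simp only [Finset.sum_mul_sum, Finset.sum_mul, Finset.mul_sum]
  refine Finset.sum_congr rfl fun x _ => Finset.sum_congr rfl fun ξ _ => ?_
  ring

/-- Pointwise form of Theorem 1.1 for general reversible chains with EVEN total
lifespan: `∏ i, P_π(τ(y) > t i) ≤ (1 - π y)^(k-1) * P_π(τ(y) > ∑ i, t i)`
whenever `∑ i, t i` is even, where
`S pi y t = ∑ x ≠ y, ∑ ξ ≠ y, π x * (P̂^t) x ξ`. -/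
theorem survival_iterated_ineq_even
    (V : Type*) [Fintype V] [DecidableEq V] (hV : 2 ≤ Fintype.card V)
    (P : Matrix V V ℝ) (hP0 : ∀ x z, 0 ≤ P x z) (hP1 : ∀ x, ∑ z, P x z = 1)
    (pi : V → ℝ) (hpi0 : ∀ x, 0 < pi x) (hpi1 : ∑ x, pi x = 1)
    (hrev : ∀ x z, pi x * P x z = pi z * P z x)
    (S : V → ℕ → ℝ)
    (hS : ∀ (y : V) (t : ℕ), S y t =
      ∑ x : {x : V // x ≠ y}, ∑ ξ : {x : V // x ≠ y},
        pi x.val * ((P.submatrix Subtype.val Subtype.val) ^ t) x ξ) :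
    ∀ (k : ℕ), 2 ≤ k → ∀ (t : Fin k → ℕ), Even (∑ i, t i) → ∀ (y : V),
      ∏ i, S y (t i) ≤ (1 - pi y) ^ (k - 1) * S y (∑ i, t i) := by
  intro k hk t htEven y
  set W := {x : V // x ≠ y} with hW
  set A : Matrix W W ℝ := P.submatrix Subtype.val Subtype.val with hA
  have hs : ∀ x : W, 0 < Real.sqrt (pi x.val) := fun x => Real.sqrt_pos.mpr (hpi0 _)
  have hsq : ∀ x : W, Real.sqrt (pi x.val) * Real.sqrt (pi x.val) = pi x.val :=
    fun x => Real.mul_self_sqrt (hpi0 _).le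
  -- nonnegativity of powers of A
  have hA0 : ∀ (u : ℕ) (x ξ : W), 0 ≤ (A ^ u) x ξ := by
    intro u
    induction u with
    | zero =>
      intro x ξ
      rw [pow_zero, Matrix.one_apply]
      split <;> norm_num
    | succ u ih =>
      intro x ξ
      rw [pow_succ, Matrix.mul_apply]
      exact Finset.sum_nonneg fun z _ => mul_nonneg (ih x z) (hP0 _ _)
  have hSnn : ∀ u : ℕ, 0 ≤ S y u := by
    intro u
    rw [hS]
    exact Finset.sum_nonneg fun x _ => Finset.sum_nonneg fun ξ _ =>
      mul_nonneg (hpi0 _).le (hA0 u x ξ)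
  -- the symmetrized matrix
  set B : Matrix W W ℝ :=
    fun x ξ => Real.sqrt (pi x.val) * A x ξ / Real.sqrt (pi ξ.val) with hBdef
  have hB : B.IsHermitian := by
    rw [Matrix.IsHermitian]
    ext x ξ
    rw [Matrix.conjTranspose_apply, star_trivial]
    show Real.sqrt (pi ξ.val) * A ξ x / Real.sqrt (pi x.val)
        = Real.sqrt (pi x.val) * A x ξ / Real.sqrt (pi ξ.val)
    rw [div_eq_div_iff (hs x).ne' (hs ξ).ne']
    have h1 := hsq x
    have h2 := hsq ξ
    have h3 := hrev ξ.val x.val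
    have hAxξ : A x ξ = P x.val ξ.val := rfl
    have hAξx : A ξ x = P ξ.val x.val := rfl
    rw [hAxξ, hAξx]
    linear_combination (P ξ.val x.val) * h2 - (P x.val ξ.val) * h1 + h3
  have hBt : ∀ (u : ℕ) (x ξ : W),
      (B ^ u) x ξ = Real.sqrt (pi x.val) * (A ^ u) x ξ / Real.sqrt (pi ξ.val) := by
    intro u
    induction u with
    | zero =>
      intro x ξ
      rw [pow_zero, pow_zero]
      simp only [Matrix.one_apply]
      split_ifs with h
      · subst h; rw [mul_one, div_self (hs x).ne']
      · rw [mul_zero, zero_div]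
    | succ u ih =>
      intro x ξ
      rw [pow_succ, pow_succ, Matrix.mul_apply, Matrix.mul_apply, Finset.mul_sum,
        Finset.sum_div]
      refine Finset.sum_congr rfl fun z _ => ?_
      rw [ih x z]
      show Real.sqrt (pi x.val) * (A ^ u) x z / Real.sqrt (pi z.val)
          * (Real.sqrt (pi z.val) * A z ξ / Real.sqrt (pi ξ.val))
          = Real.sqrt (pi x.val) * ((A ^ u) x z * A z ξ) / Real.sqrt (pi ξ.val)
      have hz := (hs z).ne'
      have hξ' := (hs ξ).ne'
      field_simp
  set v : W → ℝ := fun x => Real.sqrt (pi x.val) with hv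
  have hSv : ∀ u : ℕ, S y u = v ⬝ᵥ ((B ^ u) *ᵥ v) := by
    intro u
    rw [hS]
    simp only [dotProduct, Matrix.mulVec, Finset.mul_sum]
    refine Finset.sum_congr rfl fun x _ => Finset.sum_congr rfl fun ξ _ => ?_
    rw [hBt u x ξ]
    show pi x.val * (A ^ u) x ξ
        = Real.sqrt (pi x.val) * (Real.sqrt (pi x.val) * (A ^ u) x ξ / Real.sqrt (pi ξ.val)
            * Real.sqrt (pi ξ.val))
    rw [div_mul_cancel₀ _ (hs ξ).ne']
    linear_combination (-((A ^ u) x ξ)) * hsq x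
  obtain ⟨a, lam, ha, hform⟩ := quad_decomp B hB v
  have hSt : ∀ u : ℕ, S y u = ∑ j, a j * lam j ^ u := fun u => (hSv u).trans (hform u)
  -- total mass
  have hmass : ∑ j, a j = 1 - pi y := by
    have h0 : S y 0 = ∑ j, a j := by rw [hSt 0]; simp
    have h0' : S y 0 = ∑ x : W, pi x.val := by
      rw [hS]
      refine Finset.sum_congr rfl fun x _ => ?_
      simp [pow_zero, Matrix.one_apply, mul_ite]
    have hsub : ∑ x : W, pi x.val = 1 - pi y := by
      rw [← Finset.sum_subtype (Finset.univ.erase y) (by simp [Finset.mem_erase]) pi,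
        Finset.sum_erase_eq_sub (Finset.mem_univ y), hpi1]
    rw [← h0, h0', hsub]
  have hm0 : 0 ≤ 1 - pi y := hmass ▸ Finset.sum_nonneg fun j _ => ha j
  set F : ℕ → ℝ := fun u => ∑ j, a j * |lam j| ^ u with hFdef
  have hF0 : ∀ u, 0 ≤ F u := fun u =>
    Finset.sum_nonneg fun j _ => mul_nonneg (ha j) (pow_nonneg (abs_nonneg _) u)
  have hSF : ∀ u, S y u ≤ F u := by
    intro u
    rw [hSt u]
    refine Finset.sum_le_sum fun j _ => ?_
    refine mul_le_mul_of_nonneg_left ?_ (ha j)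
    calc lam j ^ u ≤ |lam j ^ u| := le_abs_self _
      _ = |lam j| ^ u := abs_pow _ _
  have hFeven : ∀ T : ℕ, Even T → F T = S y T := by
    intro T hT
    rw [hSt T]
    exact Finset.sum_congr rfl fun j _ => by rw [hT.pow_abs]
  have cheb : ∀ s u : ℕ, F s * F u ≤ (1 - pi y) * F (s + u) := by
    intro s u
    have := cheb_aux_s8 a (fun j => |lam j|) ha (fun j => abs_nonneg _) s u
    rwa [hmass] at this
  -- iterated inequality
  have main : ∀ (n : ℕ) (τ : Fin (n + 1) → ℕ),
      ∏ i, S y (τ i) ≤ (1 - pi y) ^ n * F (∑ i, τ i) := by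
    intro n
    induction n with
    | zero =>
      intro τ
      rw [Fin.prod_univ_one, Fin.sum_univ_one, pow_zero, one_mul]
      exact hSF (τ 0)
    | succ n ih =>
      intro τ
      rw [Fin.prod_univ_succ, Fin.sum_univ_succ]
      calc S y (τ 0) * ∏ i : Fin (n + 1), S y (τ i.succ)
          ≤ S y (τ 0) * ((1 - pi y) ^ n * F (∑ i : Fin (n + 1), τ i.succ)) :=
            mul_le_mul_of_nonneg_left (ih fun i => τ i.succ) (hSnn _)
        _ ≤ F (τ 0) * ((1 - pi y) ^ n * F (∑ i : Fin (n + 1), τ i.succ)) :=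
            mul_le_mul_of_nonneg_right (hSF _)
              (mul_nonneg (pow_nonneg hm0 n) (hF0 _))
        _ = (1 - pi y) ^ n * (F (τ 0) * F (∑ i : Fin (n + 1), τ i.succ)) := by ring
        _ ≤ (1 - pi y) ^ n * ((1 - pi y) * F (τ 0 + ∑ i : Fin (n + 1), τ i.succ)) :=
            mul_le_mul_of_nonneg_left (cheb _ _) (pow_nonneg hm0 n)
        _ = (1 - pi y) ^ (n + 1) * F (τ 0 + ∑ i : Fin (n + 1), τ i.succ) := by ring
  obtain ⟨n, rfl⟩ : ∃ n, k = n + 1 := ⟨k - 1, (Nat.succ_pred_eq_of_pos (by omega)).symm⟩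
  rw [Nat.add_sub_cancel]
  calc ∏ i, S y (t i) ≤ (1 - pi y) ^ n * F (∑ i, t i) := main n t
    _ = (1 - pi y) ^ n * S y (∑ i, t i) := by rw [hFeven _ htEven]
end

section
/- Let V be a finite type with at least 2 elements, P : Matrix V V ℝ a stochastic matrix, and π : V → ℝ a probability vector with π x > 0 for all x that is reversible for P (π x * P x y = π y * P y x for all x, y). For y ∈ V, t ≥ 0 a real number, and a probability vector ν on V, define the continuous-time survival probability S_c ν y t := ∑_{x ≠ y} ∑_{ξ ≠ y} ν x * (Matrix.exp (t • (P̂ − 1))) x ξ, where P̂ is the principal submatrix of P deleting the row and column of y and 1 is the identity matrix on {x // x ≠ y}. Then for all real t, s ≥ 0, S_c π y t * S_c π y s ≤ (1 − π y) * S_c π y (t + s), and consequently for every k ≥ 2 and all t₁, …, t_k ≥ 0, ∏_{i=1}^k S_c π y t_i ≤ (1 − π y)^{k−1} * S_c π y (t₁ + ⋯ + t_k). -/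
/-!
Reversibility makes the killed generator `P̂ - 1` similar, through `diag (√π)`, to a symmetric
matrix. By the spectral theorem the survival function is therefore a mixture of exponentials,
`S(t) = ∑ⱼ cⱼ e^{t λⱼ}` with `cⱼ ≥ 0` and `∑ⱼ cⱼ = S(0) = 1 - π y`. Since `e^{t λⱼ}` and
`e^{s λⱼ}` are similarly ordered in `j`, the weighted Chebyshev sum inequality gives
`S(t) S(s) ≤ S(0) S(t + s)`; the `k`-fold inequality follows by induction on `k`.
-/

open Finset Matrix NormedSpace

section Chebyshev

variable {ι α : Type*} [Fintype ι] [CommRing α] [LinearOrder α] [IsStrictOrderedRing α]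
  {w f g : ι → α}

theorem Monovary.weighted_sum_mul_sum_le_sum_mul_sum (hfg : Monovary f g) (hw : ∀ i, 0 ≤ w i) :
    (∑ i, w i * f i) * ∑ i, w i * g i ≤ (∑ i, w i) * ∑ i, w i * (f i * g i) := by
  set gap := (∑ i, w i) * ∑ i, w i * (f i * g i) - (∑ i, w i * f i) * ∑ i, w i * g i
  have half : ∑ i, ∑ j, (w i * w j * (f j * g j) - w i * f i * (w j * g j)) = gap := by
    simp only [gap, sum_mul_sum, ← sum_sub_distrib]
    exact sum_congr rfl fun i _ => sum_congr rfl fun j _ => by ring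
  have expand : ∑ i, ∑ j, w i * w j * ((f i - f j) * (g i - g j)) = 2 * gap := by
    rw [← half, two_mul]
    conv_rhs => arg 2; rw [sum_comm]
    rw [← sum_add_distrib]
    exact sum_congr rfl fun i _ => by
      rw [← sum_add_distrib]; exact sum_congr rfl fun j _ => by ring
  have key : 0 ≤ ∑ i, ∑ j, w i * w j * ((f i - f j) * (g i - g j)) :=
    sum_nonneg fun i _ => sum_nonneg fun j _ =>
      mul_nonneg (mul_nonneg (hw i) (hw j)) (hfg.sub_mul_sub_nonneg j i)
  linarith

end Chebyshev

namespace Matrix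

variable {n : Type*} [Fintype n] [DecidableEq n]

theorem exp_diagonal_mul_mul_diagonal {𝔸 : Type*} [NormedCommRing 𝔸] [NormedAlgebra ℚ 𝔸]
    [CompleteSpace 𝔸] {d e : n → 𝔸} (hde : ∀ i, d i * e i = 1) (A : Matrix n n 𝔸) :
    exp (diagonal d * A * diagonal e) = diagonal d * exp A * diagonal e := by
  have hinv : diagonal d * diagonal e = 1 := by
    rw [diagonal_mul_diagonal, ← diagonal_one]
    exact congrArg diagonal (funext hde)
  have hunit : IsUnit (diagonal d) :=
    (isUnit_iff_isUnit_det _).2 (isUnit_det_of_right_inverse hinv)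
  rw [← inv_eq_right_inv hinv, exp_conj _ _ hunit]

theorem IsHermitian.exp_smul_eq {B : Matrix n n ℝ} (hB : B.IsHermitian) (t : ℝ) :
    NormedSpace.exp (t • B) = (hB.eigenvectorUnitary : Matrix n n ℝ) *
      diagonal (fun j => Real.exp (t * hB.eigenvalues j)) *
        star (hB.eigenvectorUnitary : Matrix n n ℝ) := by
  set U : Matrix n n ℝ := (hB.eigenvectorUnitary : Matrix n n ℝ)
  have hU : U * star U = 1 := Unitary.mul_star_self_of_mem hB.eigenvectorUnitary.2
  have hunit : IsUnit U := (isUnit_iff_isUnit_det _).2 (isUnit_det_of_right_inverse hU)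
  have hconj : t • B = U * diagonal (fun j => t * hB.eigenvalues j) * U⁻¹ := by
    conv_lhs => rw [hB.spectral_theorem, Unitary.conjStarAlgAut_apply]
    rw [inv_eq_right_inv hU, ← smul_mul_assoc, ← mul_smul_comm, ← diagonal_smul]
    rfl
  rw [hconj, exp_conj _ _ hunit, exp_diagonal, inv_eq_right_inv hU, Pi.exp_def,
    ← Real.exp_eq_exp_ℝ]

theorem IsHermitian.dotProduct_exp_smul_mulVec {B : Matrix n n ℝ} (hB : B.IsHermitian)
    (w : n → ℝ) (t : ℝ) :
    w ⬝ᵥ NormedSpace.exp (t • B) *ᵥ w =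
      ∑ j, (w ᵥ* (hB.eigenvectorUnitary : Matrix n n ℝ)) j ^ 2 *
        Real.exp (t * hB.eigenvalues j) := by
  rw [hB.exp_smul_eq, ← mulVec_mulVec, ← mulVec_mulVec, dotProduct_mulVec, star_eq_conjTranspose,
    conjTranspose_eq_transpose_of_trivial, mulVec_transpose, dotProduct]
  exact sum_congr rfl fun j _ => by rw [mulVec_diagonal]; ring

end Matrix

section Survival

variable {n : Type*}

def IsReversible (pi : n → ℝ) (A : Matrix n n ℝ) : Prop :=
  ∀ x y, pi x * A x y = pi y * A y x

/-- With `A = P̂ - 1`, the generator of the chain killed on leaving `n`, this is the paper's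
`S_c pi y t`. -/
noncomputable def survival [Fintype n] [DecidableEq n] (pi : n → ℝ) (A : Matrix n n ℝ) (t : ℝ) :
    ℝ :=
  ∑ x, ∑ y, pi x * exp (t • A) x y

namespace IsReversible

variable {pi : n → ℝ} {A : Matrix n n ℝ}

theorem submatrix {m : Type*} (h : IsReversible pi A) (f : m → n) :
    IsReversible (pi ∘ f) (A.submatrix f f) :=
  fun x y => h (f x) (f y)

theorem sub_one [DecidableEq n] (h : IsReversible pi A) : IsReversible pi (A - 1) := by
  intro x y
  rcases eq_or_ne x y with rfl | hxy
  · rfl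
  · simp only [Matrix.sub_apply, one_apply_ne hxy, one_apply_ne hxy.symm, sub_zero, h x y]

theorem isHermitian_diagonal_mul_mul_diagonal [Fintype n] [DecidableEq n] (h : IsReversible pi A)
    (hpi : ∀ x, 0 < pi x) :
    (diagonal (Real.sqrt ∘ pi) * A * diagonal (Real.sqrt ∘ pi)⁻¹).IsHermitian := by
  ext x y
  have hx := Real.sqrt_pos.2 (hpi x)
  have hy := Real.sqrt_pos.2 (hpi y)
  have hxy := h x y
  rw [← Real.mul_self_sqrt (hpi x).le, ← Real.mul_self_sqrt (hpi y).le] at hxy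
  simp only [conjTranspose_apply, star_trivial, mul_diagonal, diagonal_mul, Function.comp_apply,
    Pi.inv_apply]
  field_simp
  linear_combination -hxy

end IsReversible

variable [Fintype n] [DecidableEq n]

theorem survival_zero (pi : n → ℝ) (A : Matrix n n ℝ) : survival pi A 0 = ∑ x, pi x := by
  simp [survival, one_apply]

theorem survival_eq_dotProduct_exp {pi : n → ℝ} (hpi : ∀ x, 0 < pi x) (A : Matrix n n ℝ)
    (t : ℝ) :
    survival pi A t = (Real.sqrt ∘ pi) ⬝ᵥ
      exp (t • (diagonal (Real.sqrt ∘ pi) * A * diagonal (Real.sqrt ∘ pi)⁻¹)) *ᵥ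
        (Real.sqrt ∘ pi) := by
  have hde : ∀ x, (Real.sqrt ∘ pi) x * (Real.sqrt ∘ pi)⁻¹ x = 1 := fun x =>
    mul_inv_cancel₀ (Real.sqrt_pos.2 (hpi x)).ne'
  rw [← smul_mul_assoc, ← mul_smul_comm, exp_diagonal_mul_mul_diagonal hde]
  simp only [survival, dotProduct, mulVec, mul_sum, mul_diagonal, diagonal_mul]
  refine sum_congr rfl fun x _ => sum_congr rfl fun y _ => ?_
  have hy : (Real.sqrt ∘ pi) y ≠ 0 := (Real.sqrt_pos.2 (hpi y)).ne'
  rw [← Real.mul_self_sqrt (hpi x).le]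
  simp only [Function.comp_apply, Pi.inv_apply] at hy ⊢
  field_simp

namespace IsReversible

variable {pi : n → ℝ} {A : Matrix n n ℝ}

theorem exists_survival_eq_sum_mul_exp (h : IsReversible pi A) (hpi : ∀ x, 0 < pi x) :
    ∃ c lam : n → ℝ, (∀ j, 0 ≤ c j) ∧ ∀ t, survival pi A t = ∑ j, c j * Real.exp (t * lam j) :=
  ⟨_, _, fun _ => sq_nonneg _, fun t => (survival_eq_dotProduct_exp hpi A t).trans
    ((h.isHermitian_diagonal_mul_mul_diagonal hpi).dotProduct_exp_smul_mulVec _ t)⟩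

theorem survival_nonneg (h : IsReversible pi A) (hpi : ∀ x, 0 < pi x) (t : ℝ) :
    0 ≤ survival pi A t := by
  obtain ⟨c, lam, hc, hrep⟩ := h.exists_survival_eq_sum_mul_exp hpi
  rw [hrep]
  exact sum_nonneg fun j _ => mul_nonneg (hc j) (Real.exp_pos _).le

theorem survival_mul_survival_le (h : IsReversible pi A) (hpi : ∀ x, 0 < pi x) {t s : ℝ}
    (ht : 0 ≤ t) (hs : 0 ≤ s) :
    survival pi A t * survival pi A s ≤ (∑ x, pi x) * survival pi A (t + s) := by
  obtain ⟨c, lam, hc, hrep⟩ := h.exists_survival_eq_sum_mul_exp hpi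
  have hmass : ∑ x, pi x = ∑ j, c j := by simp [← survival_zero pi A, hrep]
  have hmono : Monovary (fun j => Real.exp (t * lam j)) (fun j => Real.exp (s * lam j)) :=
    (Monotone.monovary (fun a b hab => Real.exp_le_exp.2 (mul_le_mul_of_nonneg_left hab ht))
      (fun a b hab => Real.exp_le_exp.2 (mul_le_mul_of_nonneg_left hab hs))).comp_right lam
  simpa only [hmass, hrep, add_mul, Real.exp_add] using
    hmono.weighted_sum_mul_sum_le_sum_mul_sum hc

end IsReversible

end Survival

theorem Fin.prod_le_pow_mul_apply_sum {F : ℝ → ℝ} {C : ℝ} (hF : ∀ t, 0 ≤ t → 0 ≤ F t)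
    (hC : 0 ≤ C) (hmul : ∀ t s, 0 ≤ t → 0 ≤ s → F t * F s ≤ C * F (t + s)) :
    ∀ (m : ℕ) (t : Fin (m + 1) → ℝ), (∀ i, 0 ≤ t i) → ∏ i, F (t i) ≤ C ^ m * F (∑ i, t i)
  | 0, t, _ => by simp
  | m + 1, t, ht => by
    rw [Fin.prod_univ_castSucc, Fin.sum_univ_castSucc]
    have hsum : 0 ≤ ∑ i : Fin (m + 1), t i.castSucc := sum_nonneg fun i _ => ht _
    calc (∏ i : Fin (m + 1), F (t i.castSucc)) * F (t (Fin.last _))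
        ≤ C ^ m * F (∑ i : Fin (m + 1), t i.castSucc) * F (t (Fin.last _)) :=
          mul_le_mul_of_nonneg_right (Fin.prod_le_pow_mul_apply_sum hF hC hmul m _ fun i => ht _)
            (hF _ (ht _))
      _ ≤ C ^ m * (C * F (∑ i : Fin (m + 1), t i.castSucc + t (Fin.last _))) := by
          rw [mul_assoc]
          exact mul_le_mul_of_nonneg_left (hmul _ _ hsum (ht _)) (pow_nonneg hC m)
      _ = C ^ (m + 1) * F (∑ i : Fin (m + 1), t i.castSucc + t (Fin.last _)) := by ring

theorem survival_ineq_continuous_general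
    (V : Type*) [Fintype V] [DecidableEq V]
    (P : Matrix V V ℝ)
    (pi : V → ℝ) (hpi0 : ∀ x, 0 < pi x) (hpi1 : ∑ x, pi x = 1)
    (hrev : ∀ x z, pi x * P x z = pi z * P z x)
    (Sc : V → ℝ → ℝ)
    (hSc : ∀ (y : V) (t : ℝ), Sc y t =
      ∑ x : {x : V // x ≠ y}, ∑ ξ : {x : V // x ≠ y},
        pi x.val *
          (NormedSpace.exp (t • ((P.submatrix Subtype.val Subtype.val)
              - (1 : Matrix {x : V // x ≠ y} {x : V // x ≠ y} ℝ)))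
            : Matrix {x : V // x ≠ y} {x : V // x ≠ y} ℝ) x ξ) :
    (∀ (y : V) (t s : ℝ), 0 ≤ t → 0 ≤ s →
        Sc y t * Sc y s ≤ (1 - pi y) * Sc y (t + s)) ∧
      (∀ (k : ℕ), 2 ≤ k → ∀ (t : Fin k → ℝ), (∀ i, 0 ≤ t i) → ∀ (y : V),
        ∏ i, Sc y (t i) ≤ (1 - pi y) ^ (k - 1) * Sc y (∑ i, t i)) := by
  have hSc' (y : V) :
      Sc y = survival (pi ∘ Subtype.val) (P.submatrix Subtype.val Subtype.val - 1) :=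
    funext (hSc y)
  have hrev' (y : V) : IsReversible (pi ∘ Subtype.val)
      (P.submatrix (Subtype.val : {x // x ≠ y} → V) Subtype.val - 1) :=
    (IsReversible.submatrix hrev _).sub_one
  have hmass (y : V) : ∑ x : {x // x ≠ y}, pi x = 1 - pi y := by
    rw [← hpi1, ← sum_erase_add _ _ (mem_univ y), add_sub_cancel_right]
    exact (sum_subtype _ (by simp) pi).symm
  have hmul (y : V) (t s : ℝ) (ht : 0 ≤ t) (hs : 0 ≤ s) :
      Sc y t * Sc y s ≤ (1 - pi y) * Sc y (t + s) := by
    rw [hSc', ← hmass]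
    exact (hrev' y).survival_mul_survival_le (fun x => hpi0 x) ht hs
  refine ⟨hmul, fun k hk t ht y => ?_⟩
  obtain ⟨m, rfl⟩ : ∃ m, k = m + 1 := ⟨k - 1, by omega⟩
  exact Fin.prod_le_pow_mul_apply_sum
    (fun t _ => hSc' y ▸ (hrev' y).survival_nonneg (fun x => hpi0 x) t)
    (hmass y ▸ sum_nonneg fun x _ => (hpi0 x).le) (hmul y) m t ht

/-- Pointwise form of Theorem 1.1 in the continuous-time case: with
`S_c ν y t = ∑ x ≠ y, ∑ ξ ≠ y, ν x * (exp (t • (P̂ - 1))) x ξ` the survival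
probability of the continuous-time chain, for the stationary start `π` one has
`S_c π y t * S_c π y s ≤ (1 - π y) * S_c π y (t + s)` for all `t, s ≥ 0`, and
consequently `∏ i, S_c π y (t i) ≤ (1 - π y)^(k-1) * S_c π y (∑ i, t i)` for
every `k ≥ 2` and nonnegative lifespans. -/
theorem survival_ineq_continuous
    (V : Type*) [Fintype V] [DecidableEq V] (hV : 2 ≤ Fintype.card V)
    (P : Matrix V V ℝ) (hP0 : ∀ x z, 0 ≤ P x z) (hP1 : ∀ x, ∑ z, P x z = 1)
    (pi : V → ℝ) (hpi0 : ∀ x, 0 < pi x) (hpi1 : ∑ x, pi x = 1)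
    (hrev : ∀ x z, pi x * P x z = pi z * P z x)
    (Sc : V → ℝ → ℝ)
    (hSc : ∀ (y : V) (t : ℝ), Sc y t =
      ∑ x : {x : V // x ≠ y}, ∑ ξ : {x : V // x ≠ y},
        pi x.val *
          (NormedSpace.exp (t • ((P.submatrix Subtype.val Subtype.val)
              - (1 : Matrix {x : V // x ≠ y} {x : V // x ≠ y} ℝ)))
            : Matrix {x : V // x ≠ y} {x : V // x ≠ y} ℝ) x ξ) :
    (∀ (y : V) (t s : ℝ), 0 ≤ t → 0 ≤ s →
        Sc y t * Sc y s ≤ (1 - pi y) * Sc y (t + s)) ∧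
      (∀ (k : ℕ), 2 ≤ k → ∀ (t : Fin k → ℝ), (∀ i, 0 ≤ t i) → ∀ (y : V),
        ∏ i, Sc y (t i) ≤ (1 - pi y) ^ (k - 1) * Sc y (∑ i, t i)) :=
  survival_ineq_continuous_general V P pi hpi0 hpi1 hrev Sc hSc
end

section
/- Let V be a finite type with at least 2 elements, P : Matrix V V ℝ a stochastic matrix, and π : V → ℝ a probability vector with 0 < π x < 1 for all x that is reversible for P (π x * P x y = π y * P y x for all x, y). Assume P is 1/2-lazy, i.e. P = (1/2) • (1 + Q) for some stochastic matrix Q. Set π⋆ := min_x π x / (1 − π x). Let k ≥ 2 and let ν₁, …, ν_k be probability vectors on V such that for every i and every x, |ν_i x − π x| / π x ≤ (1 + π⋆)^{1/k} − 1. For y ∈ V, t ∈ ℕ, and a probability vector ν, define S ν y t := ∑_{x ≠ y} ∑_{ξ ≠ y} ν x * (P̂^t) x ξ, where P̂ is the principal submatrix of P deleting the row and column of y. Then for all t₁, …, t_k ∈ ℕ and every y ∈ V, ∏_{i=1}^k S ν_i y t_i ≤ S π y (t₁ + ⋯ + t_k). -/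
open Matrix

open Finset in
/-- Weighted Chebyshev / FKG-type correlation inequality. -/
lemma weighted_chebyshev {ι : Type*} [Fintype ι] (a p q : ι → ℝ)
    (ha : ∀ j, 0 ≤ a j) (hpq : ∀ j l, 0 ≤ (p j - p l) * (q j - q l)) :
    (∑ j, a j * p j) * (∑ j, a j * q j) ≤ (∑ j, a j) * (∑ j, a j * (p j * q j)) := by
  have key : (0:ℝ) ≤ ∑ j, ∑ l, a j * a l * ((p j - p l) * (q j - q l)) :=
    Finset.sum_nonneg fun j _ => Finset.sum_nonneg fun l _ =>
      mul_nonneg (mul_nonneg (ha j) (ha l)) (hpq j l)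
  have expand : ∑ j, ∑ l, a j * a l * ((p j - p l) * (q j - q l))
      = 2 * ((∑ j, a j) * (∑ j, a j * (p j * q j))
        - (∑ j, a j * p j) * (∑ j, a j * q j)) := by
    have h1 : ∀ j : ι, ∑ l, a j * a l * ((p j - p l) * (q j - q l))
        = a j * (p j * q j) * (∑ l, a l) - a j * p j * (∑ l, a l * q l)
          - a j * q j * (∑ l, a l * p l) + a j * (∑ l, a l * (p l * q l)) := by
      intro j
      rw [Finset.mul_sum, Finset.mul_sum, Finset.mul_sum, Finset.mul_sum]
      rw [← Finset.sum_sub_distrib, ← Finset.sum_sub_distrib, ← Finset.sum_add_distrib]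
      exact Finset.sum_congr rfl fun l _ => by ring
    rw [Finset.sum_congr rfl fun j _ => h1 j]
    rw [Finset.sum_add_distrib, Finset.sum_sub_distrib, Finset.sum_sub_distrib,
      ← Finset.sum_mul, ← Finset.sum_mul, ← Finset.sum_mul, ← Finset.sum_mul]
    ring
  linarith [expand ▸ key]

/-- Supermultiplicativity iterates to products. -/
lemma supermul_prod (m : ℕ → ℝ) (h0 : ∀ n, 0 ≤ m n)
    (hsup : ∀ s t : ℕ, m s * m t ≤ m 0 * m (s + t)) {ι : Type*} [DecidableEq ι] :
    ∀ (s : Finset ι) (t : ι → ℕ), s.Nonempty →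
      ∏ i ∈ s, m (t i) ≤ m 0 ^ (s.card - 1) * m (∑ i ∈ s, t i) := by
  intro s t hne
  induction s using Finset.cons_induction with
  | empty => exact absurd hne (by simp)
  | cons a s ha ih =>
    rcases s.eq_empty_or_nonempty with rfl | hs
    · simp
    · rw [Finset.prod_cons, Finset.sum_cons, Finset.card_cons]
      calc m (t a) * ∏ i ∈ s, m (t i)
          ≤ m (t a) * (m 0 ^ (s.card - 1) * m (∑ i ∈ s, t i)) :=
            mul_le_mul_of_nonneg_left (ih hs) (h0 _)
        _ = m 0 ^ (s.card - 1) * (m (t a) * m (∑ i ∈ s, t i)) := by ring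
        _ ≤ m 0 ^ (s.card - 1) * (m 0 * m (t a + ∑ i ∈ s, t i)) :=
            mul_le_mul_of_nonneg_left (hsup _ _) (pow_nonneg (h0 0) _)
        _ = m 0 ^ (s.card - 1 + 1) * m (t a + ∑ i ∈ s, t i) := by rw [pow_succ]; ring
        _ = m 0 ^ (s.card + 1 - 1) * m (t a + ∑ i ∈ s, t i) := by
            have hc : 1 ≤ s.card := Finset.card_pos.2 hs
            rw [Nat.sub_add_cancel hc, Nat.add_sub_cancel]

/-- Pointwise form of Proposition 1.2 (One vs. Many — Near Uniform
Independent, lazy case): if each starting distribution `ν i` satisfies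
`|ν i x − π x| / π x ≤ (1 + π⋆)^(1/k) − 1` with
`π⋆ = min_x π x / (1 − π x)`, then
`∏ i, P_{ν i}(τ(y) > t i) ≤ P_π(τ(y) > ∑ i, t i)`, where
`S μ y t = ∑ x ≠ y, ∑ ξ ≠ y, μ x * (P̂^t) x ξ`. -/
theorem one_vs_many_near_uniform_independent
    (V : Type*) [Fintype V] [DecidableEq V] (hV : 2 ≤ Fintype.card V)
    (P : Matrix V V ℝ) (hP0 : ∀ x z, 0 ≤ P x z) (hP1 : ∀ x, ∑ z, P x z = 1)
    (pi : V → ℝ) (hpi0 : ∀ x, 0 < pi x) (hpi1' : ∀ x, pi x < 1)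
    (hpi1 : ∑ x, pi x = 1)
    (hrev : ∀ x z, pi x * P x z = pi z * P z x)
    (hlazy : ∃ Q : Matrix V V ℝ, (∀ x z, 0 ≤ Q x z) ∧ (∀ x, ∑ z, Q x z = 1) ∧
      P = (1/2 : ℝ) • (1 + Q))
    (pistar : ℝ) (hpistar : pistar = ⨅ x : V, pi x / (1 - pi x))
    (k : ℕ) (hk : 2 ≤ k)
    (nu : Fin k → V → ℝ) (hnu0 : ∀ i x, 0 ≤ nu i x) (hnu1 : ∀ i, ∑ x, nu i x = 1)
    (hclose : ∀ (i : Fin k) (x : V),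
      |nu i x - pi x| / pi x ≤ (1 + pistar) ^ ((1 : ℝ) / k) - 1)
    (S : (V → ℝ) → V → ℕ → ℝ)
    (hS : ∀ (μ : V → ℝ) (y : V) (t : ℕ), S μ y t =
      ∑ x : {x : V // x ≠ y}, ∑ ξ : {x : V // x ≠ y},
        μ x.val * ((P.submatrix Subtype.val Subtype.val) ^ t) x ξ) :
    ∀ (t : Fin k → ℕ) (y : V),
      ∏ i, S (nu i) y (t i) ≤ S pi y (∑ i, t i) := by
  intro t y
  classical
  have hVne : Nonempty V := Fintype.card_pos_iff.mp (by omega)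
  set W := {x : V // x ≠ y} with hW
  set M : Matrix W W ℝ := P.submatrix Subtype.val Subtype.val with hM
  -- nonnegativity of powers of M
  have hMpow0 : ∀ (n : ℕ) (i j : W), 0 ≤ (M ^ n) i j := by
    intro n
    induction n with
    | zero => intro i j; rw [pow_zero]; by_cases h : i = j <;>
        simp [Matrix.one_apply, h]
    | succ n ih =>
      intro i j
      rw [pow_succ, Matrix.mul_apply]
      exact Finset.sum_nonneg fun l _ => mul_nonneg (ih i l) (hP0 _ _)
  -- the survival sequence for the stationary distribution
  set m : ℕ → ℝ := fun n => ∑ i : W, ∑ j : W, pi i.val * (M ^ n) i j with hm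
  have hm0 : ∀ n, 0 ≤ m n := by
    intro n
    exact Finset.sum_nonneg fun i _ => Finset.sum_nonneg fun j _ =>
      mul_nonneg (hpi0 _).le (hMpow0 n i j)
  -- sums over the subtype
  have hsumW : ∀ g : V → ℝ, ∑ j : W, g j.val = (∑ z, g z) - g y := by
    intro g
    rw [← Finset.sum_subtype (Finset.univ.erase y)
      (fun x => by simp [Finset.mem_erase]) g]
    exact Finset.sum_erase_eq_sub (Finset.mem_univ y)
  -- m 0 = 1 - pi y
  have hm0val : m 0 = 1 - pi y := by
    have : ∀ i : W, ∑ j : W, pi i.val * ((M ^ 0) i j) = pi i.val := by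
      intro i
      rw [pow_zero]
      rw [Finset.sum_eq_single i (fun j _ hj => by
        simp [Matrix.one_apply, (Ne.symm hj)]) (by simp)]
      simp [Matrix.one_apply]
    rw [hm]
    simp only [this]
    rw [hsumW pi, hpi1]
  -- square roots of the stationary weights
  set sw : W → ℝ := fun i => Real.sqrt (pi i.val) with hsw
  have hsw0 : ∀ i, 0 < sw i := fun i => Real.sqrt_pos.2 (hpi0 _)
  have hswsq : ∀ i, sw i * sw i = pi i.val := fun i => Real.mul_self_sqrt (hpi0 _).le
  -- the symmetrized matrix
  set A : Matrix W W ℝ := Matrix.of (fun i j => sw i * M i j * (sw j)⁻¹) with hA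
  have hApow : ∀ (n : ℕ) (i j : W), (A ^ n) i j = sw i * (M ^ n) i j * (sw j)⁻¹ := by
    intro n
    induction n with
    | zero =>
      intro i j
      rw [pow_zero, pow_zero]
      by_cases h : i = j
      · subst h; simp [Matrix.one_apply, mul_inv_cancel₀ (hsw0 i).ne']
      · simp [Matrix.one_apply, h]
    | succ n ih =>
      intro i j
      have hterm : ∀ l : W, (A ^ n) i l * A l j
          = sw i * ((M ^ n) i l * M l j) * (sw j)⁻¹ := by
        intro l
        rw [ih i l]
        show sw i * (M ^ n) i l * (sw l)⁻¹ * (sw l * M l j * (sw j)⁻¹) = _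
        have h1 := (hsw0 l).ne'
        have h2 := (hsw0 j).ne'
        field_simp
      rw [pow_succ, pow_succ, Matrix.mul_apply, Matrix.mul_apply,
        Finset.sum_congr rfl fun l _ => hterm l, ← Finset.sum_mul, ← Finset.mul_sum]
  -- m in terms of A
  have hmA : ∀ n, m n = sw ⬝ᵥ ((A ^ n) *ᵥ sw) := by
    intro n
    rw [hm]
    simp only [dotProduct, Matrix.mulVec, dotProduct]
    refine Finset.sum_congr rfl fun i _ => ?_
    rw [Finset.mul_sum]
    refine Finset.sum_congr rfl fun j _ => ?_
    rw [hApow n i j]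
    have h2 : (sw j)⁻¹ * sw j = 1 := inv_mul_cancel₀ (hsw0 j).ne'
    rw [← hswsq i]
    rw [mul_assoc (sw i * (M ^ n) i j), h2, mul_one]
    ring
  -- A is symmetric
  have hrevM : ∀ i j : W, pi i.val * M i j = pi j.val * M j i := fun i j => hrev _ _
  have hAherm : A.IsHermitian := by
    refine Matrix.IsHermitian.ext fun i j => ?_
    simp only [Matrix.conjTranspose_apply, star_trivial]
    show sw j * M j i * (sw i)⁻¹ = sw i * M i j * (sw j)⁻¹
    have h1 := hrevM i j
    rw [← hswsq i, ← hswsq j] at h1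
    have hi := (hsw0 i).ne'
    have hj := (hsw0 j).ne'
    field_simp
    nlinarith [h1]
  -- A is positive semidefinite (uses laziness)
  obtain ⟨Q, hQ0, hQ1, hPQ⟩ := hlazy
  have hrevQ : ∀ x z, pi x * Q x z = pi z * Q z x := by
    intro x z
    have hx : P x z = 1/2 * ((1 : Matrix V V ℝ) x z + Q x z) := by
      rw [hPQ]; simp [Matrix.add_apply]
    have hz : P z x = 1/2 * ((1 : Matrix V V ℝ) z x + Q z x) := by
      rw [hPQ]; simp [Matrix.add_apply]
    have := hrev x z
    rw [hx, hz] at this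
    by_cases h : x = z
    · subst h; rfl
    · simp only [Matrix.one_apply, h, (Ne.symm h), if_false] at this
      linarith
  have hApsd : A.PosSemidef := by
    refine Matrix.PosSemidef.of_dotProduct_mulVec_nonneg hAherm fun x => ?_
    show (0:ℝ) ≤ x ⬝ᵥ A *ᵥ x
    set f : W → ℝ := fun i => x i * (sw i)⁻¹ with hf
    have hx : ∀ i, x i = sw i * f i := by
      intro i
      show x i = sw i * (x i * (sw i)⁻¹)
      rw [mul_comm (x i), ← mul_assoc, mul_inv_cancel₀ (hsw0 i).ne', one_mul]
    have hquad : x ⬝ᵥ (A *ᵥ x) = ∑ i : W, ∑ j : W, pi i.val * M i j * (f i * f j) := by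
      simp only [dotProduct, Matrix.mulVec, dotProduct, Finset.mul_sum]
      refine Finset.sum_congr rfl fun i _ => Finset.sum_congr rfl fun j _ => ?_
      show x i * (sw i * M i j * (sw j)⁻¹ * x j) = _
      rw [hx i, hx j, ← hswsq i]
      have h2 : (sw j)⁻¹ * (sw j * f j) = f j := by
        rw [← mul_assoc, inv_mul_cancel₀ (hsw0 j).ne', one_mul]
      calc sw i * f i * (sw i * M i j * (sw j)⁻¹ * (sw j * f j))
          = sw i * f i * (sw i * M i j * ((sw j)⁻¹ * (sw j * f j))) := by ring
        _ = sw i * f i * (sw i * M i j * f j) := by rw [h2]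
        _ = sw i * sw i * M i j * (f i * f j) := by ring
    rw [hquad]
    -- split M = (1 + Q)/2 on the subtype
    have hMQ : ∀ i j : W, M i j = 1/2 * ((if i = j then (1:ℝ) else 0) + Q i.val j.val) := by
      intro i j
      show P i.val j.val = _
      rw [hPQ]
      simp only [Matrix.smul_apply, Matrix.add_apply, Matrix.one_apply, smul_eq_mul]
      congr 2
      by_cases h : i = j
      · simp [h]
      · have hvv : i.val ≠ j.val := fun hc => h (Subtype.ext hc)
        simp [h, hvv]
    have hterm : ∀ i j : W, pi i.val * M i j * (f i * f j)
        = 1/2 * ((if i = j then pi i.val * (f i * f i) else 0)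
          + pi i.val * Q i.val j.val * (f i * f j)) := by
      intro i j
      rw [hMQ i j]
      by_cases h : i = j
      · subst h; simp; ring
      · simp [h]; ring
    have e1 : ∑ i : W, ∑ j : W, pi i.val * M i j * (f i * f j)
        = 1/2 * ((∑ i : W, pi i.val * (f i * f i))
          + ∑ i : W, ∑ j : W, pi i.val * Q i.val j.val * (f i * f j)) := by
      have hrow : ∀ i : W, ∑ j : W, pi i.val * M i j * (f i * f j)
          = 1/2 * (pi i.val * (f i * f i)
            + ∑ j : W, pi i.val * Q i.val j.val * (f i * f j)) := by
        intro i
        rw [Finset.sum_congr rfl fun j _ => hterm i j, ← Finset.mul_sum,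
          Finset.sum_add_distrib, Finset.sum_ite_eq]
        simp
      rw [Finset.sum_congr rfl fun i _ => hrow i, ← Finset.mul_sum,
        Finset.sum_add_distrib]
    -- bound the Q-quadratic form from below
    set g : W → ℝ := fun i => pi i.val * (f i * f i) with hg
    have hg0 : ∀ i, 0 ≤ g i := fun i => mul_nonneg (hpi0 _).le (mul_self_nonneg _)
    have rowW : ∀ v : V, ∑ j : W, Q v j.val ≤ 1 := by
      intro v
      rw [hsumW (fun z => Q v z), hQ1 v]
      simp [hQ0 v y]
    have hT1 : ∑ i : W, ∑ j : W, pi i.val * Q i.val j.val * (f i * f i)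
        ≤ ∑ i : W, g i := by
      refine Finset.sum_le_sum fun i _ => ?_
      have : ∑ j : W, pi i.val * Q i.val j.val * (f i * f i)
          = g i * ∑ j : W, Q i.val j.val := by
        rw [Finset.mul_sum]
        exact Finset.sum_congr rfl fun j _ => by rw [hg]; ring
      rw [this]
      calc g i * ∑ j : W, Q i.val j.val ≤ g i * 1 :=
            mul_le_mul_of_nonneg_left (rowW i.val) (hg0 i)
        _ = g i := mul_one _
    have hT2 : ∑ i : W, ∑ j : W, pi i.val * Q i.val j.val * (f j * f j)
        ≤ ∑ i : W, g i := by
      rw [Finset.sum_comm]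
      refine Finset.sum_le_sum fun j _ => ?_
      have : ∑ i : W, pi i.val * Q i.val j.val * (f j * f j)
          = g j * ∑ i : W, Q j.val i.val := by
        rw [Finset.mul_sum]
        refine Finset.sum_congr rfl fun i _ => ?_
        rw [hg, ← mul_assoc, hrevQ i.val j.val]
        ring
      rw [this]
      calc g j * ∑ i : W, Q j.val i.val ≤ g j * 1 :=
            mul_le_mul_of_nonneg_left (rowW j.val) (hg0 j)
        _ = g j := mul_one _
    have hQQ : -(∑ i : W, g i)
        ≤ ∑ i : W, ∑ j : W, pi i.val * Q i.val j.val * (f i * f j) := by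
      have h1 : ∀ i j : W,
          -(1/2) * (pi i.val * Q i.val j.val * (f i * f i)
            + pi i.val * Q i.val j.val * (f j * f j))
          ≤ pi i.val * Q i.val j.val * (f i * f j) := by
        intro i j
        have hw : 0 ≤ pi i.val * Q i.val j.val :=
          mul_nonneg (hpi0 _).le (hQ0 _ _)
        nlinarith [mul_nonneg hw (sq_nonneg (f i + f j))]
      have h2 : ∑ i : W, ∑ j : W, (-(1/2) * (pi i.val * Q i.val j.val * (f i * f i)
            + pi i.val * Q i.val j.val * (f j * f j)))
          ≤ ∑ i : W, ∑ j : W, pi i.val * Q i.val j.val * (f i * f j) :=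
        Finset.sum_le_sum fun i _ => Finset.sum_le_sum fun j _ => h1 i j
      have h3 : ∑ i : W, ∑ j : W, (-(1/2) * (pi i.val * Q i.val j.val * (f i * f i)
            + pi i.val * Q i.val j.val * (f j * f j)))
          = -(1/2) * ((∑ i : W, ∑ j : W, pi i.val * Q i.val j.val * (f i * f i))
            + ∑ i : W, ∑ j : W, pi i.val * Q i.val j.val * (f j * f j)) := by
        simp only [Finset.sum_add_distrib, ← Finset.mul_sum]
      linarith [h2, h3 ▸ h2, hT1, hT2]
    rw [e1]
    linarith [hQQ, Finset.sum_nonneg (fun i (_ : i ∈ Finset.univ) => hg0 i)]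
  -- spectral decomposition of A
  have hlam0 : ∀ j, 0 ≤ hAherm.eigenvalues j := fun j => hApsd.eigenvalues_nonneg j
  set lam : W → ℝ := hAherm.eigenvalues with hlamdef
  set U : Matrix W W ℝ := (Matrix.IsHermitian.eigenvectorUnitary hAherm : Matrix W W ℝ) with hU
  have hUU : U * star U = 1 :=
    (Matrix.mem_unitaryGroup_iff).mp (Matrix.IsHermitian.eigenvectorUnitary hAherm).2
  have hUU' : star U * U = 1 :=
    (Matrix.mem_unitaryGroup_iff').mp (Matrix.IsHermitian.eigenvectorUnitary hAherm).2
  have hspec : A = U * Matrix.diagonal lam * star U := by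
    have h := hAherm.spectral_theorem
    rwa [show (RCLike.ofReal ∘ hAherm.eigenvalues : W → ℝ) = lam by
      rw [RCLike.ofReal_real_eq_id]; rfl] at h
  have hspecpow : ∀ n : ℕ, A ^ n = U * Matrix.diagonal (fun j => lam j ^ n) * star U := by
    intro n
    induction n with
    | zero =>
      rw [pow_zero, show (fun j : W => lam j ^ 0) = fun _ => (1:ℝ) from
        funext fun j => pow_zero _, Matrix.diagonal_one, mul_one, hUU]
    | succ n ih =>
      rw [pow_succ, ih, hspec]
      calc U * Matrix.diagonal (fun j => lam j ^ n) * star U * (U * Matrix.diagonal lam * star U)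
          = U * Matrix.diagonal (fun j => lam j ^ n) * (star U * U) * (Matrix.diagonal lam * star U) := by
            simp only [Matrix.mul_assoc]
        _ = U * (Matrix.diagonal (fun j => lam j ^ n) * Matrix.diagonal lam) * star U := by
            rw [hUU', Matrix.mul_one]
            simp only [Matrix.mul_assoc]
        _ = U * Matrix.diagonal (fun j => lam j ^ (n+1)) * star U := by
            rw [Matrix.diagonal_mul_diagonal,
              show (fun j : W => lam j ^ n * lam j) = fun j => lam j ^ (n+1) from
                funext fun j => (pow_succ (lam j) n).symm]
  set c : W → ℝ := (star U) *ᵥ sw with hc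
  have hveq : Matrix.vecMul sw U = c := by
    funext j
    rw [hc]
    simp only [Matrix.vecMul, Matrix.mulVec, dotProduct, Matrix.conjTranspose_apply,
      star_trivial]
    exact Finset.sum_congr rfl fun i _ => mul_comm _ _
  have hmlam : ∀ n, m n = ∑ j : W, (c j)^2 * lam j ^ n := by
    intro n
    rw [hmA n, hspecpow n, ← Matrix.mulVec_mulVec, ← Matrix.mulVec_mulVec,
      Matrix.dotProduct_mulVec, hveq]
    simp only [Matrix.mulVec_diagonal, dotProduct]
    exact Finset.sum_congr rfl fun j _ => by ring
  -- supermultiplicativity via weighted Chebyshev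
  have hsup : ∀ s n : ℕ, m s * m n ≤ m 0 * m (s + n) := by
    intro s n
    have hmono : ∀ j l : W, 0 ≤ (lam j ^ s - lam l ^ s) * (lam j ^ n - lam l ^ n) := by
      intro j l
      rcases le_total (lam j) (lam l) with h | h
      · have a1 : lam j ^ s - lam l ^ s ≤ 0 :=
          sub_nonpos.2 (pow_le_pow_left₀ (hlam0 j) h s)
        have a2 : lam j ^ n - lam l ^ n ≤ 0 :=
          sub_nonpos.2 (pow_le_pow_left₀ (hlam0 j) h n)
        nlinarith
      · exact mul_nonneg
          (sub_nonneg.2 (pow_le_pow_left₀ (hlam0 l) h s))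
          (sub_nonneg.2 (pow_le_pow_left₀ (hlam0 l) h n))
    have key := weighted_chebyshev (fun j : W => (c j)^2) (fun j => lam j ^ s)
      (fun j => lam j ^ n) (fun j => sq_nonneg _) hmono
    rw [hmlam s, hmlam n, hmlam 0, hmlam (s + n)]
    calc (∑ j : W, (c j)^2 * lam j ^ s) * (∑ j : W, (c j)^2 * lam j ^ n)
        ≤ (∑ j : W, (c j)^2) * (∑ j : W, (c j)^2 * (lam j ^ s * lam j ^ n)) := key
      _ = (∑ j : W, (c j)^2 * lam j ^ 0) * (∑ j : W, (c j)^2 * lam j ^ (s + n)) := by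
          rw [Finset.sum_congr rfl fun j (_ : j ∈ Finset.univ) =>
            (by rw [pow_zero, mul_one] : (c j)^2 * lam j ^ 0 = (c j)^2),
            Finset.sum_congr rfl fun j (_ : j ∈ Finset.univ) =>
            (by rw [pow_add] : (c j)^2 * lam j ^ (s + n) = (c j)^2 * (lam j ^ s * lam j ^ n))]
  -- the product bound for the stationary chain
  have hFinNe : Nonempty (Fin k) := ⟨⟨0, by omega⟩⟩
  have hprodm : ∏ i, m (t i) ≤ m 0 ^ (k - 1) * m (∑ i, t i) := by
    have := supermul_prod m hm0 hsup Finset.univ t Finset.univ_nonempty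
    rwa [Finset.card_univ, Fintype.card_fin] at this
  -- comparison of nu with pi
  have hb0 : 0 < 1 - pi y := by linarith [hpi1' y]
  have hpistar0 : 0 ≤ pistar := by
    rw [hpistar]
    refine le_ciInf fun x => ?_
    exact div_nonneg (hpi0 x).le (by linarith [hpi1' x])
  set r : ℝ := (1 + pistar) ^ ((1 : ℝ) / k) with hr
  have hr0 : 0 ≤ r := Real.rpow_nonneg (by linarith) _
  have hrk : r ^ k = 1 + pistar := by
    rw [hr, ← Real.rpow_natCast ((1 + pistar) ^ ((1:ℝ)/k)) k,
      ← Real.rpow_mul (by linarith : (0:ℝ) ≤ 1 + pistar), one_div,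
      inv_mul_cancel₀ (Nat.cast_ne_zero.2 (by omega : k ≠ 0)), Real.rpow_one]
  have hnu_le : ∀ (i : Fin k) (x : V), nu i x ≤ r * pi x := by
    intro i x
    have h := hclose i x
    rw [div_le_iff₀ (hpi0 x)] at h
    have h2 : nu i x - pi x ≤ (r - 1) * pi x := (le_abs_self _).trans h
    nlinarith [hpi0 x]
  have hS0 : ∀ i : Fin k, 0 ≤ S (nu i) y (t i) := by
    intro i
    rw [hS]
    exact Finset.sum_nonneg fun x _ => Finset.sum_nonneg fun ξ _ =>
      mul_nonneg (hnu0 i x.val) (hMpow0 _ x ξ)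
  have hSbound : ∀ i : Fin k, S (nu i) y (t i) ≤ r * m (t i) := by
    intro i
    rw [hS, hm]
    rw [Finset.mul_sum]
    refine Finset.sum_le_sum fun x _ => ?_
    rw [Finset.mul_sum]
    refine Finset.sum_le_sum fun ξ _ => ?_
    rw [← mul_assoc]
    exact mul_le_mul_of_nonneg_right (hnu_le i x.val) (hMpow0 _ x ξ)
  have hSpi : S pi y (∑ i, t i) = m (∑ i, t i) := by rw [hS, hm]
  -- numeric endgame
  have hble : pistar ≤ pi y / (1 - pi y) := by
    rw [hpistar]
    exact ciInf_le (Set.Finite.bddBelow (Set.finite_range _)) y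
  have h1 : (1 + pistar) * (1 - pi y) ≤ 1 := by
    have := (le_div_iff₀ hb0).mp hble
    nlinarith
  have hbk : (1 - pi y) ^ (k - 2) ≤ 1 :=
    pow_le_one₀ hb0.le (by linarith [hpi0 y])
  have hsplit : (1 - pi y) ^ (k - 1) = (1 - pi y) * (1 - pi y) ^ (k - 2) := by
    rw [← pow_succ']
    congr 1
    omega
  calc ∏ i, S (nu i) y (t i)
      ≤ ∏ i, (r * m (t i)) :=
        Finset.prod_le_prod (fun i _ => hS0 i) (fun i _ => hSbound i)
    _ = r ^ k * ∏ i, m (t i) := by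
        rw [Finset.prod_mul_distrib, Finset.prod_const, Finset.card_univ, Fintype.card_fin]
    _ ≤ r ^ k * (m 0 ^ (k - 1) * m (∑ i, t i)) :=
        mul_le_mul_of_nonneg_left hprodm (pow_nonneg hr0 k)
    _ = (1 + pistar) * ((1 - pi y) ^ (k - 1) * m (∑ i, t i)) := by rw [hrk, hm0val]
    _ = ((1 + pistar) * (1 - pi y)) * ((1 - pi y) ^ (k - 2) * m (∑ i, t i)) := by
        rw [hsplit]; ring
    _ ≤ 1 * ((1 - pi y) ^ (k - 2) * m (∑ i, t i)) :=
        mul_le_mul_of_nonneg_right h1 (mul_nonneg (pow_nonneg hb0.le _) (hm0 _))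
    _ = (1 - pi y) ^ (k - 2) * m (∑ i, t i) := one_mul _
    _ ≤ 1 * m (∑ i, t i) := mul_le_mul_of_nonneg_right hbk (hm0 _)
    _ = m (∑ i, t i) := one_mul _
    _ = S pi y (∑ i, t i) := hSpi.symm
end

section
/- Let V be a finite type with at least 2 elements, P : Matrix V V ℝ a stochastic matrix, and π : V → ℝ a probability vector with 0 < π x < 1 for all x that is reversible for P (π x * P x y = π y * P y x for all x, y). Assume P is 1/2-lazy, i.e. P = (1/2) • (1 + Q) for some stochastic matrix Q. Set π⋆ := min_x π x / (1 − π x). Let ε ∈ (0,1), let ν₁, ν₂ be probability vectors on V with |ν_i x − π x| / π x ≤ (1 + ε * π⋆)^{1/2} − 1 for all x and i ∈ {1,2}, and let μ : V → V → ℝ be a coupling of ν₁ and ν₂ (μ x₁ x₂ ≥ 0, ∑_{x₂} μ x₁ x₂ = ν₁ x₁, ∑_{x₁} μ x₁ x₂ = ν₂ x₂) satisfying |μ x₁ x₂ − ν₁ x₁ * ν₂ x₂| / (π x₁ * π x₂) ≤ (1 − ε) * π⋆ for all x₁, x₂. For y ∈ V, x ∈ V, and t ∈ ℕ define S_x y t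 := ∑_{ξ ≠ y} (P̂^t) x ξ when x ≠ y and S_x y t := 0 when x = y and t ≥ 1 (and S_x y 0 := if x ≠ y then the row sum else 0), where P̂ is the principal submatrix of P deleting the row and column of y. Then for all t₁, t₂ ∈ ℕ and every y ∈ V, ∑_{x₁, x₂ ∈ V} μ x₁ x₂ * S_{x₁} y t₁ * S_{x₂} y t₂ ≤ ∑_{x ≠ y} ∑_{ξ ≠ y} π x * (P̂^{t₁+t₂}) x ξ. -/
open Finset Matrix
set_option maxHeartbeats 1000000


/-- A nonnegative log-convex sequence satisfies `m a * m b ≤ m 0 * m (a+b)`. -/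
lemma ovm_seq_key (m : ℕ → ℝ) (h0 : ∀ t, 0 ≤ m t)
    (hlc : ∀ t, m (t+1)^2 ≤ m t * m (t+2)) :
    ∀ a b, m a * m b ≤ m 0 * m (a+b) := by
  by_cases hpos : ∀ t, 0 < m t
  · have hstep : ∀ t, m (t+1) / m t ≤ m (t+2) / m (t+1) := by
      intro t
      rw [div_le_div_iff₀ (hpos t) (hpos (t+1))]
      nlinarith [hlc t]
    have hr : ∀ s k, m (s+1) / m s ≤ m (s+k+1) / m (s+k) := by
      intro s k
      induction k with
      | zero => exact le_refl _
      | succ k ih =>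
        have : m (s+k+1) / m (s+k) ≤ m (s+k+2) / m (s+k+1) := hstep (s+k)
        have h2 : m (s + (k+1) + 1) = m (s+k+2) := by ring_nf
        have h3 : m (s + (k+1)) = m (s+k+1) := by ring_nf
        rw [h2, h3]
        exact ih.trans this
    intro a b
    induction a with
    | zero => simp
    | succ a ih =>
      have ha := (hpos a).ne'
      have hab := (hpos (a+b)).ne'
      have e1 : m (a+1) * m b = (m (a+1) / m a) * (m a * m b) := by
        field_simp
      have e2 : (m (a+b+1) / m (a+b)) * (m 0 * m (a+b)) = m 0 * m (a+b+1) := by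
        field_simp
      have e3 : a + 1 + b = a + b + 1 := by omega
      calc m (a+1) * m b = (m (a+1) / m a) * (m a * m b) := e1
        _ ≤ (m (a+1) / m a) * (m 0 * m (a+b)) := by
            exact mul_le_mul_of_nonneg_left ih (div_nonneg (h0 _) (h0 _))
        _ ≤ (m (a+b+1) / m (a+b)) * (m 0 * m (a+b)) := by
            exact mul_le_mul_of_nonneg_right (hr a b) (mul_nonneg (h0 _) (h0 _))
        _ = m 0 * m (a+b+1) := e2
        _ = m 0 * m (a+1+b) := by rw [e3]
  · push_neg at hpos
    obtain ⟨t₀, ht₀⟩ := hpos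
    have ht₀' : m t₀ = 0 := le_antisymm ht₀ (h0 t₀)
    have hsq : ∀ k, m k * m (k+2) = 0 → m (k+1) = 0 := by
      intro k hk
      have h1 := hlc k
      rw [hk] at h1
      have := sq_nonneg (m (k+1))
      have : m (k+1)^2 = 0 := le_antisymm h1 this
      exact (pow_eq_zero_iff two_ne_zero).mp this
    have h1 : m 1 = 0 := by
      rcases t₀ with _ | s
      · exact hsq 0 (by rw [ht₀', zero_mul])
      · -- m (s+1) = 0; go down to m 1 = 0
        have hdown : ∀ k, m (k+1) = 0 → m 1 = 0 := by
          intro k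
          induction k with
          | zero => exact id
          | succ k ih =>
            intro hk
            exact ih (hsq k (by rw [hk, mul_zero]))
        exact hdown s ht₀'
    have hall : ∀ t, m (t+1) = 0 := by
      intro t
      induction t with
      | zero => exact h1
      | succ t ih => exact hsq (t+1) (by rw [ih, zero_mul])
    intro a b
    rcases a with _ | a
    · simp
    · rw [hall a, zero_mul]
      exact mul_nonneg (h0 0) (h0 _)

lemma ovm_pow_nonneg {n : Type*} [Fintype n] [DecidableEq n] (A : Matrix n n ℝ)
    (hA : ∀ x z, 0 ≤ A x z) (t : ℕ) : ∀ x z, 0 ≤ (A^t) x z := by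
  induction t with
  | zero =>
    intro x z
    rw [pow_zero]
    by_cases h : x = z <;> simp [Matrix.one_apply, h]
  | succ t ih =>
    intro x z
    rw [pow_succ, Matrix.mul_apply]
    exact Finset.sum_nonneg fun u _ => mul_nonneg (ih x u) (hA u z)

lemma ovm_pow_kernel_symm {n : Type*} [Fintype n] [DecidableEq n] (A : Matrix n n ℝ)
    (w : n → ℝ) (hsym : ∀ x z, w x * A x z = w z * A z x) :
    ∀ t x z, w x * (A^t) x z = w z * (A^t) z x := by
  intro t
  induction t with
  | zero =>
    intro x z
    by_cases h : x = z
    · subst h; rfl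
    · rw [pow_zero, Matrix.one_apply_ne h, Matrix.one_apply_ne (Ne.symm h)]; ring
  | succ t ih =>
    intro x z
    have e1 : (A^(t+1)) x z = ∑ u, A x u * (A^t) u z := by
      rw [pow_succ', Matrix.mul_apply]
    have e2 : (A^(t+1)) z x = ∑ u, (A^t) z u * A u x := by
      rw [pow_succ, Matrix.mul_apply]
    rw [e1, e2, Finset.mul_sum, Finset.mul_sum]
    exact Finset.sum_congr rfl fun u _ => by
      linear_combination (A^t) u z * hsym x u + A u x * ih u z

lemma ovm_selfadj {n : Type*} [Fintype n] (M : Matrix n n ℝ) (w : n → ℝ)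
    (hsym : ∀ x z, w x * M x z = w z * M z x) (g h : n → ℝ) :
    ∑ x, w x * g x * (M *ᵥ h) x = ∑ x, w x * h x * (M *ᵥ g) x := by
  simp only [Matrix.mulVec, dotProduct]
  calc (∑ x, w x * g x * ∑ z, M x z * h z)
      = ∑ x, ∑ z, (w x * M x z) * (g x * h z) := by
        refine Finset.sum_congr rfl fun x _ => ?_
        rw [Finset.mul_sum]
        exact Finset.sum_congr rfl fun z _ => by ring
    _ = ∑ x, ∑ z, (w z * M z x) * (g x * h z) := by
        exact Finset.sum_congr rfl fun x _ => Finset.sum_congr rfl fun z _ => by rw [hsym]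
    _ = ∑ z, ∑ x, (w z * M z x) * (g x * h z) := Finset.sum_comm
    _ = (∑ z, w z * h z * ∑ x, M z x * g x) := by
        refine Finset.sum_congr rfl fun z _ => ?_
        rw [Finset.mul_sum]
        exact Finset.sum_congr rfl fun x _ => by ring

/-- Key inequality: for a π-reversible, entrywise-nonnegative, π-PSD matrix `A`,
`⟨1, A^a 1⟩ ⟨1, A^b 1⟩ ≤ ⟨1,1⟩ ⟨1, A^(a+b) 1⟩`. -/
lemma ovm_key {n : Type*} [Fintype n] [DecidableEq n] (A : Matrix n n ℝ) (w : n → ℝ)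
    (hw : ∀ x, 0 ≤ w x) (hA0 : ∀ x z, 0 ≤ A x z)
    (hsym : ∀ x z, w x * A x z = w z * A z x)
    (hpsd : ∀ g : n → ℝ, 0 ≤ ∑ x, w x * g x * (A *ᵥ g) x)
    (a b : ℕ) :
    (∑ x, w x * ∑ z, (A^a) x z) * (∑ x, w x * ∑ z, (A^b) x z) ≤
      (∑ x, w x) * (∑ x, w x * ∑ z, (A^(a+b)) x z) := by
  classical
  set one : n → ℝ := fun _ => 1 with hone
  have hmv1 : ∀ (t : ℕ) (x : n), ((A^t) *ᵥ one) x = ∑ z, (A^t) x z := by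
    intro t x
    simp [hone, Matrix.mulVec, dotProduct]
  set m : ℕ → ℝ := fun t => ∑ x, w x * ((A^t) *ᵥ one) x with hm
  have hsymt := ovm_pow_kernel_symm A w hsym
  have hqpsd : ∀ (t : ℕ) (g : n → ℝ), 0 ≤ ∑ x, w x * g x * ((A^t) *ᵥ g) x := by
    intro t
    induction t using Nat.twoStepInduction with
    | zero =>
      intro g
      rw [pow_zero]
      simp only [Matrix.one_mulVec]
      exact Finset.sum_nonneg fun x _ => by rw [mul_assoc]; exact mul_nonneg (hw x) (mul_self_nonneg (g x))
    | one =>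
      intro g
      rw [pow_one]
      exact hpsd g
    | more t iht _ =>
      intro g
      have e1 : (A^(t+2)) *ᵥ g = (A^(t+1)) *ᵥ (A *ᵥ g) := by
        rw [mulVec_mulVec, ← pow_succ]
      have e2 : (A^(t+1)) *ᵥ g = (A^t) *ᵥ (A *ᵥ g) := by
        rw [mulVec_mulVec, ← pow_succ]
      rw [e1, ovm_selfadj (A^(t+1)) w (hsymt (t+1)) g (A *ᵥ g), e2]
      exact iht (A *ᵥ g)
  have hm0 : ∀ t, 0 ≤ m t := by
    intro t
    refine Finset.sum_nonneg fun x _ => mul_nonneg (hw x) ?_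
    rw [hmv1]
    exact Finset.sum_nonneg fun z _ => ovm_pow_nonneg A hA0 t x z
  have hlc : ∀ t, m (t+1)^2 ≤ m t * m (t+2) := by
    intro t
    set u : n → ℝ := A *ᵥ one with hu
    have I1 : ∑ x, w x * one x * ((A^t) *ᵥ u) x = m (t+1) := by
      rw [hu, mulVec_mulVec, ← pow_succ]
      simp [hm, hone]
    have I2 : ∑ x, w x * u x * ((A^t) *ᵥ one) x = m (t+1) := by
      rw [ovm_selfadj (A^t) w (hsymt t) u one]
      exact I1
    have I3 : ∑ x, w x * u x * ((A^t) *ᵥ u) x = m (t+2) := by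
      rw [hu, mulVec_mulVec, ← pow_succ]
      rw [ovm_selfadj (A^(t+1)) w (hsymt (t+1)) (A *ᵥ one) one]
      rw [mulVec_mulVec, ← pow_succ]
      simp [hm, hone]
    have I0 : ∑ x, w x * one x * ((A^t) *ᵥ one) x = m t := by
      simp [hm, hone]
    have hquad : ∀ s : ℝ, 0 ≤ m (t+2) * (s * s) + (2 * m (t+1)) * s + m t := by
      intro s
      have h0' := hqpsd t (one + s • u)
      have hexp : (A^t) *ᵥ (one + s • u) = ((A^t) *ᵥ one) + s • ((A^t) *ᵥ u) := by
        rw [Matrix.mulVec_add, Matrix.mulVec_smul]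
      rw [hexp] at h0'
      have expand : ∑ x, w x * (one + s • u) x * (((A^t) *ᵥ one) + s • ((A^t) *ᵥ u)) x
          = (∑ x, w x * one x * ((A^t) *ᵥ one) x)
            + s * (∑ x, w x * one x * ((A^t) *ᵥ u) x)
            + s * (∑ x, w x * u x * ((A^t) *ᵥ one) x)
            + (s * s) * (∑ x, w x * u x * ((A^t) *ᵥ u) x) := by
        rw [Finset.mul_sum, Finset.mul_sum, Finset.mul_sum, ← Finset.sum_add_distrib,
          ← Finset.sum_add_distrib, ← Finset.sum_add_distrib]
        refine Finset.sum_congr rfl fun x _ => ?_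
        simp only [Pi.add_apply, Pi.smul_apply, smul_eq_mul]
        ring
      rw [expand, I0, I1, I2, I3] at h0'
      linarith
    have hd := discrim_le_zero hquad
    rw [discrim] at hd
    nlinarith [hd]
  have hfin := ovm_seq_key m hm0 hlc a b
  have hm0eq : m 0 = ∑ x, w x := by
    simp [hm, hone, Matrix.one_mulVec]
  have hma : ∀ t, m t = ∑ x, w x * ∑ z, (A^t) x z := by
    intro t
    exact Finset.sum_congr rfl fun x _ => by rw [hmv1]
  rw [hma a, hma b, hma (a+b), hm0eq] at hfin
  exact hfin


/-- Pointwise form of Proposition 1.3 (One vs. Many — Near Uniform Dependent,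
`k = 2`, lazy case): if `ν₁, ν₂` are near-stationary and `μ` is a coupling of
them that is nearly independent, then
`∑ x₁ x₂, μ x₁ x₂ * P_{x₁}(τ(y) > t₁) * P_{x₂}(τ(y) > t₂) ≤ P_π(τ(y) > t₁+t₂)`,
where `S x y t = ∑ ξ ≠ y, (P̂^t) x ξ` for `x ≠ y` and `S y y t = 0`. -/
theorem one_vs_many_near_uniform_dependent
    (V : Type*) [Fintype V] [DecidableEq V] (hV : 2 ≤ Fintype.card V)
    (P : Matrix V V ℝ) (hP0 : ∀ x z, 0 ≤ P x z) (hP1 : ∀ x, ∑ z, P x z = 1)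
    (pi : V → ℝ) (hpi0 : ∀ x, 0 < pi x) (hpi1' : ∀ x, pi x < 1)
    (hpi1 : ∑ x, pi x = 1)
    (hrev : ∀ x z, pi x * P x z = pi z * P z x)
    (hlazy : ∃ Q : Matrix V V ℝ, (∀ x z, 0 ≤ Q x z) ∧ (∀ x, ∑ z, Q x z = 1) ∧
      P = (1/2 : ℝ) • (1 + Q))
    (pistar : ℝ) (hpistar : pistar = ⨅ x : V, pi x / (1 - pi x))
    (ε : ℝ) (hε : ε ∈ Set.Ioo (0 : ℝ) 1)
    (nu₁ nu₂ : V → ℝ)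
    (hnu₁0 : ∀ x, 0 ≤ nu₁ x) (hnu₁1 : ∑ x, nu₁ x = 1)
    (hnu₂0 : ∀ x, 0 ≤ nu₂ x) (hnu₂1 : ∑ x, nu₂ x = 1)
    (hclose₁ : ∀ x, |nu₁ x - pi x| / pi x ≤ (1 + ε * pistar) ^ ((1 : ℝ) / 2) - 1)
    (hclose₂ : ∀ x, |nu₂ x - pi x| / pi x ≤ (1 + ε * pistar) ^ ((1 : ℝ) / 2) - 1)
    (μ : V → V → ℝ) (hμ0 : ∀ x₁ x₂, 0 ≤ μ x₁ x₂)
    (hμ₁ : ∀ x₁, ∑ x₂, μ x₁ x₂ = nu₁ x₁)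
    (hμ₂ : ∀ x₂, ∑ x₁, μ x₁ x₂ = nu₂ x₂)
    (hcoupling : ∀ x₁ x₂,
      |μ x₁ x₂ - nu₁ x₁ * nu₂ x₂| / (pi x₁ * pi x₂) ≤ (1 - ε) * pistar)
    (S : V → V → ℕ → ℝ)
    (hS : ∀ (x y : V) (t : ℕ), S x y t =
      if h : x ≠ y then
        ∑ ξ : {z : V // z ≠ y}, ((P.submatrix Subtype.val Subtype.val) ^ t) (⟨x, h⟩ : {z : V // z ≠ y}) ξ
      else 0) :
    ∀ (t₁ t₂ : ℕ) (y : V),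
      ∑ x₁ : V, ∑ x₂ : V, μ x₁ x₂ * S x₁ y t₁ * S x₂ y t₂ ≤
        ∑ x : {z : V // z ≠ y}, ∑ ξ : {z : V // z ≠ y},
          pi x.val * ((P.submatrix Subtype.val Subtype.val) ^ (t₁ + t₂)) x ξ := by
  intro t₁ t₂ y
  classical
  obtain ⟨hε0, hε1⟩ := hε
  set A : Matrix {z : V // z ≠ y} {z : V // z ≠ y} ℝ :=
    P.submatrix Subtype.val Subtype.val with hA
  set w : {z : V // z ≠ y} → ℝ := fun x => pi x.val with hw
  -- basic facts about pistar
  have hNV : Nonempty V := Fintype.card_pos_iff.mp (by omega)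
  have hbdd : BddBelow (Set.range fun x : V => pi x / (1 - pi x)) :=
    (Set.finite_range _).bddBelow
  have h0star : 0 ≤ pistar := by
    rw [hpistar]
    refine le_ciInf fun x => ?_
    have h1 := hpi0 x
    have h2 := hpi1' x
    exact div_nonneg h1.le (by linarith)
  have hstarle : pistar ≤ pi y / (1 - pi y) := by
    rw [hpistar]
    exact ciInf_le hbdd y
  -- rho
  set ρ : ℝ := (1 + ε * pistar) ^ ((1 : ℝ) / 2) with hρ
  have hbase : (0:ℝ) ≤ 1 + ε * pistar := by nlinarith
  have hρ0 : 0 ≤ ρ := Real.rpow_nonneg hbase _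
  have hρsq : ρ ^ 2 = 1 + ε * pistar := by
    rw [hρ, ← Real.rpow_natCast ((1 + ε * pistar) ^ ((1:ℝ)/2)) 2, ← Real.rpow_mul hbase]
    norm_num
  -- facts about S
  have hA0 : ∀ x z, 0 ≤ A x z := fun x z => hP0 _ _
  have hSy : ∀ t, S y y t = 0 := by
    intro t
    rw [hS]
    simp
  have hSx : ∀ (t : ℕ) (x : {z : V // z ≠ y}), S x.1 y t = ∑ z, (A ^ t) x z := by
    intro t x
    rw [hS, dif_pos x.2]
  have hS0 : ∀ (x : V) (t : ℕ), 0 ≤ S x y t := by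
    intro x t
    rw [hS]
    split
    · exact Finset.sum_nonneg fun z _ => ovm_pow_nonneg A hA0 t _ z
    · exact le_rfl
  -- reversibility on the subtype
  have hsymA : ∀ x z, w x * A x z = w z * A z x := by
    intro x z
    exact hrev x.1 z.1
  -- PSD from laziness
  obtain ⟨Q, hQ0, hQ1, hPQ⟩ := hlazy
  have hAform : ∀ x z : {z : V // z ≠ y},
      A x z = (1/2) * ((if x = z then (1:ℝ) else 0) + Q x.1 z.1) := by
    intro x z
    have : A x z = P x.1 z.1 := rfl
    rw [this, hPQ]
    simp only [Matrix.smul_apply, Matrix.add_apply, Matrix.one_apply, smul_eq_mul]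
    congr 2
    by_cases h : x = z
    · rw [if_pos h, if_pos (by rw [h])]
    · rw [if_neg h, if_neg (fun hc => h (Subtype.ext hc))]
  have hrevQ : ∀ a b : V, pi a * Q a b = pi b * Q b a := by
    intro a b
    have h := hrev a b
    rw [hPQ] at h
    simp only [Matrix.smul_apply, Matrix.add_apply, Matrix.one_apply, smul_eq_mul] at h
    by_cases hab : a = b
    · rw [hab]
    · rw [if_neg hab, if_neg (Ne.symm hab)] at h
      nlinarith [h]
  have hpsd : ∀ g : {z : V // z ≠ y} → ℝ, 0 ≤ ∑ x, w x * g x * (A *ᵥ g) x := by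
    intro g
    set d : {z : V // z ≠ y} → {z : V // z ≠ y} → ℝ := fun x z => w x * Q x.1 z.1 with hd
    have hd0 : ∀ x z, 0 ≤ d x z := fun x z => mul_nonneg (hpi0 _).le (hQ0 _ _)
    have hdsym : ∀ x z, d x z = d z x := fun x z => hrevQ x.1 z.1
    have hdrow : ∀ x, ∑ z, d x z ≤ w x := by
      intro x
      have hsub : ∑ z : {z : V // z ≠ y}, Q x.1 z.1 ≤ 1 := by
        have e : ∑ z : {z : V // z ≠ y}, Q x.1 z.1
            = ∑ z ∈ Finset.univ.erase y, Q x.1 z :=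
          (Finset.sum_subtype _ (by simp) _).symm
        rw [e]
        calc ∑ z ∈ Finset.univ.erase y, Q x.1 z
            ≤ ∑ z, Q x.1 z := Finset.sum_le_sum_of_subset_of_nonneg
              (Finset.erase_subset _ _) (fun z _ _ => hQ0 _ _)
          _ = 1 := hQ1 _
      calc ∑ z, d x z = w x * ∑ z : {z : V // z ≠ y}, Q x.1 z.1 := by rw [Finset.mul_sum]
        _ ≤ w x * 1 := mul_le_mul_of_nonneg_left hsub (hpi0 _).le
        _ = w x := mul_one _
    -- main computation
    have hcalc : ∑ x, w x * g x * (A *ᵥ g) x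
        = (1/2) * ((∑ x, w x * (g x * g x)) + ∑ x, ∑ z, d x z * (g x * g z)) := by
      simp only [Matrix.mulVec, dotProduct]
      have e1 : ∀ x : {z : V // z ≠ y}, w x * g x * ∑ z, A x z * g z
          = ∑ z, ((1/2) * ((if x = z then w x * (g x * g z) else 0) + d x z * (g x * g z))) := by
        intro x
        rw [Finset.mul_sum]
        refine Finset.sum_congr rfl fun z _ => ?_
        rw [hAform x z]
        by_cases h : x = z
        · rw [if_pos h, if_pos h]; ring
        · rw [if_neg h, if_neg h]; simp only [hd]; ring
      rw [Finset.sum_congr rfl fun x _ => e1 x]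
      have e2 : ∀ x : {z : V // z ≠ y},
          ∑ z, ((1/2) * ((if x = z then w x * (g x * g z) else 0) + d x z * (g x * g z)))
          = (1/2) * ((w x * (g x * g x)) + ∑ z, d x z * (g x * g z)) := by
        intro x
        rw [← Finset.mul_sum]
        congr 1
        rw [Finset.sum_add_distrib]
        congr 1
        simp [Finset.sum_ite_eq]
      rw [Finset.sum_congr rfl fun x _ => e2 x, ← Finset.mul_sum]
      congr 1
      rw [Finset.sum_add_distrib]
    have hsq : 0 ≤ ∑ x, ∑ z, d x z * (g x + g z)^2 :=
      Finset.sum_nonneg fun x _ => Finset.sum_nonneg fun z _ =>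
        mul_nonneg (hd0 x z) (sq_nonneg _)
    have hswap : ∑ x, ∑ z, d x z * (g z * g z) = ∑ x, ∑ z, d x z * (g x * g x) := by
      rw [Finset.sum_comm]
      exact Finset.sum_congr rfl fun x _ => Finset.sum_congr rfl fun z _ => by
        rw [hdsym]
    have hexpand : ∑ x, ∑ z, d x z * (g x + g z)^2
        = (∑ x, ∑ z, d x z * (g x * g x)) + (∑ x, ∑ z, d x z * (g z * g z))
          + 2 * (∑ x, ∑ z, d x z * (g x * g z)) := by
      rw [Finset.mul_sum, ← Finset.sum_add_distrib, ← Finset.sum_add_distrib]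
      refine Finset.sum_congr rfl fun x _ => ?_
      rw [Finset.mul_sum, ← Finset.sum_add_distrib, ← Finset.sum_add_distrib]
      exact Finset.sum_congr rfl fun z _ => by ring
    have hdiag : ∑ x, ∑ z, d x z * (g x * g x) ≤ ∑ x, w x * (g x * g x) := by
      refine Finset.sum_le_sum fun x _ => ?_
      rw [← Finset.sum_mul]
      exact mul_le_mul_of_nonneg_right (hdrow x) (mul_self_nonneg _)
    rw [hcalc]
    nlinarith [hsq, hexpand, hswap, hdiag]
  -- apply key inequality
  have hkey := ovm_key A w (fun x => (hpi0 _).le) hA0 hsymA hpsd t₁ t₂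
  -- translation lemmas
  have hMt : ∀ t : ℕ, ∑ x : V, pi x * S x y t = ∑ x, w x * ∑ z, (A ^ t) x z := by
    intro t
    rw [← Finset.sum_erase_add Finset.univ _ (Finset.mem_univ y), hSy, mul_zero, add_zero]
    rw [Finset.sum_subtype (Finset.univ.erase y)
      (p := fun z : V => z ≠ y) (by simp) (fun x => pi x * S x y t)]
    exact Finset.sum_congr rfl fun x _ => by rw [hSx t x]
  have hW : ∑ x : {z : V // z ≠ y}, w x = 1 - pi y := by
    rw [← Finset.sum_subtype (Finset.univ.erase y)
      (p := fun z : V => z ≠ y) (by simp) (fun x => pi x)]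
    rw [Finset.sum_erase_eq_sub (Finset.mem_univ y), hpi1]
  have hWpos : 0 < 1 - pi y := by linarith [hpi1' y]
  -- abbreviations
  set M₁ : ℝ := ∑ x : V, pi x * S x y t₁ with hM₁
  set M₂ : ℝ := ∑ x : V, pi x * S x y t₂ with hM₂
  set N₁ : ℝ := ∑ x : V, nu₁ x * S x y t₁ with hN₁
  set N₂ : ℝ := ∑ x : V, nu₂ x * S x y t₂ with hN₂
  set F : ℝ := ∑ x, w x * ∑ z, (A ^ (t₁ + t₂)) x z with hF
  have hM₁0 : 0 ≤ M₁ := Finset.sum_nonneg fun x _ => mul_nonneg (hpi0 x).le (hS0 x t₁)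
  have hM₂0 : 0 ≤ M₂ := Finset.sum_nonneg fun x _ => mul_nonneg (hpi0 x).le (hS0 x t₂)
  have hN₂0 : 0 ≤ N₂ := Finset.sum_nonneg fun x _ => mul_nonneg (hnu₂0 x) (hS0 x t₂)
  have hF0 : 0 ≤ F := by
    refine Finset.sum_nonneg fun x _ => mul_nonneg (hpi0 _).le ?_
    exact Finset.sum_nonneg fun z _ => ovm_pow_nonneg A hA0 _ x z
  have hkey' : M₁ * M₂ ≤ (1 - pi y) * F := by
    rw [hM₁, hM₂, hMt t₁, hMt t₂, hF]
    rw [← hW]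
    exact hkey
  -- bounds on N₁ N₂
  have hnuup : ∀ (nu : V → ℝ),
      (∀ x, |nu x - pi x| / pi x ≤ ρ - 1) → ∀ x, nu x ≤ ρ * pi x := by
    intro nu hcl x
    have h := hcl x
    rw [div_le_iff₀ (hpi0 x)] at h
    have h2 : nu x - pi x ≤ (ρ - 1) * pi x := (abs_le.mp h).2
    nlinarith [hpi0 x]
  have hbN₁ : N₁ ≤ ρ * M₁ := by
    rw [hN₁, hM₁, Finset.mul_sum]
    refine Finset.sum_le_sum fun x _ => ?_
    have h1 : nu₁ x ≤ ρ * pi x := hnuup nu₁ hclose₁ x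
    have h2 := hS0 x t₁
    calc nu₁ x * S x y t₁ ≤ (ρ * pi x) * S x y t₁ := mul_le_mul_of_nonneg_right h1 h2
      _ = ρ * (pi x * S x y t₁) := by ring
  have hbN₂ : N₂ ≤ ρ * M₂ := by
    rw [hN₂, hM₂, Finset.mul_sum]
    refine Finset.sum_le_sum fun x _ => ?_
    have h1 : nu₂ x ≤ ρ * pi x := hnuup nu₂ hclose₂ x
    have h2 := hS0 x t₂
    calc nu₂ x * S x y t₂ ≤ (ρ * pi x) * S x y t₂ := mul_le_mul_of_nonneg_right h1 h2
      _ = ρ * (pi x * S x y t₂) := by ring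
  -- main LHS bound
  have hLHS : ∑ x₁ : V, ∑ x₂ : V, μ x₁ x₂ * S x₁ y t₁ * S x₂ y t₂
      ≤ N₁ * N₂ + ((1 - ε) * pistar) * (M₁ * M₂) := by
    have hterm : ∀ x₁ x₂ : V, μ x₁ x₂ * S x₁ y t₁ * S x₂ y t₂
        ≤ (nu₁ x₁ * S x₁ y t₁) * (nu₂ x₂ * S x₂ y t₂)
          + ((1 - ε) * pistar) * ((pi x₁ * S x₁ y t₁) * (pi x₂ * S x₂ y t₂)) := by
      intro x₁ x₂
      have hc := hcoupling x₁ x₂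
      rw [div_le_iff₀ (mul_pos (hpi0 x₁) (hpi0 x₂))] at hc
      have hub : μ x₁ x₂ ≤ nu₁ x₁ * nu₂ x₂ + (1 - ε) * pistar * (pi x₁ * pi x₂) := by
        have := (abs_le.mp hc).2
        linarith
      have hs₁ := hS0 x₁ t₁
      have hs₂ := hS0 x₂ t₂
      calc μ x₁ x₂ * S x₁ y t₁ * S x₂ y t₂
          = μ x₁ x₂ * (S x₁ y t₁ * S x₂ y t₂) := by ring
        _ ≤ (nu₁ x₁ * nu₂ x₂ + (1 - ε) * pistar * (pi x₁ * pi x₂))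
              * (S x₁ y t₁ * S x₂ y t₂) :=
            mul_le_mul_of_nonneg_right hub (mul_nonneg hs₁ hs₂)
        _ = (nu₁ x₁ * S x₁ y t₁) * (nu₂ x₂ * S x₂ y t₂)
              + ((1 - ε) * pistar) * ((pi x₁ * S x₁ y t₁) * (pi x₂ * S x₂ y t₂)) := by ring
    calc ∑ x₁ : V, ∑ x₂ : V, μ x₁ x₂ * S x₁ y t₁ * S x₂ y t₂
        ≤ ∑ x₁ : V, ∑ x₂ : V, ((nu₁ x₁ * S x₁ y t₁) * (nu₂ x₂ * S x₂ y t₂)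
            + ((1 - ε) * pistar) * ((pi x₁ * S x₁ y t₁) * (pi x₂ * S x₂ y t₂))) :=
          Finset.sum_le_sum fun x₁ _ => Finset.sum_le_sum fun x₂ _ => hterm x₁ x₂
      _ = N₁ * N₂ + ((1 - ε) * pistar) * (M₁ * M₂) := by
          rw [hN₁, hN₂, hM₁, hM₂, Finset.sum_mul_sum, Finset.sum_mul_sum]
          rw [Finset.mul_sum, ← Finset.sum_add_distrib]
          refine Finset.sum_congr rfl fun x₁ _ => ?_
          rw [Finset.mul_sum, ← Finset.sum_add_distrib]
  -- goal equals F up to rearrangement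
  have hgoal : ∑ x : {z : V // z ≠ y}, ∑ ξ : {z : V // z ≠ y},
      pi x.val * ((P.submatrix Subtype.val Subtype.val) ^ (t₁ + t₂)) x ξ = F := by
    rw [hF]
    exact Finset.sum_congr rfl fun x _ => by rw [Finset.mul_sum]
  rw [hgoal]
  -- the final chain
  have hstarW : pistar * (1 - pi y) ≤ pi y := by
    rw [le_div_iff₀ hWpos] at hstarle
    exact hstarle
  have hNN : N₁ * N₂ ≤ (ρ * M₁) * (ρ * M₂) :=
    mul_le_mul hbN₁ hbN₂ hN₂0 (mul_nonneg hρ0 hM₁0)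
  have h1 : N₁ * N₂ + ((1 - ε) * pistar) * (M₁ * M₂)
      ≤ (1 + pistar) * (M₁ * M₂) := by
    have heq : (ρ * M₁) * (ρ * M₂) = (1 + ε * pistar) * (M₁ * M₂) := by
      rw [← hρsq]; ring
    have hNN' : N₁ * N₂ ≤ (1 + ε * pistar) * (M₁ * M₂) := heq ▸ hNN
    calc N₁ * N₂ + ((1 - ε) * pistar) * (M₁ * M₂)
        ≤ (1 + ε * pistar) * (M₁ * M₂) + ((1 - ε) * pistar) * (M₁ * M₂) :=
          add_le_add_left hNN' _
      _ = (1 + pistar) * (M₁ * M₂) := by ring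
  have h2 : (1 + pistar) * (M₁ * M₂) ≤ (1 + pistar) * ((1 - pi y) * F) :=
    mul_le_mul_of_nonneg_left hkey' (by linarith)
  have h3 : (1 + pistar) * ((1 - pi y) * F) ≤ F := by
    have hc : (1 + pistar) * (1 - pi y) ≤ 1 := by linarith only [hstarW]
    calc (1 + pistar) * ((1 - pi y) * F) = ((1 + pistar) * (1 - pi y)) * F := by ring
      _ ≤ 1 * F := mul_le_mul_of_nonneg_right hc hF0
      _ = F := one_mul F
  linarith [hLHS, h1, h2, h3]
end
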